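/- arXiv:1406.4700 — 8 statements merged into one kernel-verified Lean document; each statement's English description precedes it below -/
import Mathlib

section
/- Let G be a group acting on ℝ by orientation-preserving homeomorphisms, and let a, b, w₁, w₂ ∈ G with integers m, n ≥ 0 (not both zero), r ∈ ℤ, k ≥ 0, satisfying the relation (w₁ a^m w₁⁻¹) b^{-r} (w₂⁻¹ a^n w₂) b^{r-k} = 1. Suppose a acts without fixed points, with a·x > x for all x ∈ ℝ, and m + n ≥ 1. Then k ≥ 1 and b·x > x for all x ∈ ℝ. -/
/-- Given the relation `(w₁ a^m w₁⁻¹) b^{-r} (w₂⁻¹ a^n w₂) b^{r-k} = 1`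
with `m + n ≥ 1`, `k ≥ 0`, and `Φ a` moving every point strictly up,
then `k ≥ 1` and `Φ b` moves every point strictly up. -/
theorem stmt5 {G : Type*} [Group G] (Φ : G →* (ℝ ≃o ℝ)) (a b w₁ w₂ : G)
    (m n : ℕ) (hmn : 1 ≤ m + n) (r k : ℤ) (hk : 0 ≤ k)
    (hrel : (w₁ * a ^ m * w₁⁻¹) * b ^ (-r) * (w₂⁻¹ * a ^ n * w₂) * b ^ (r - k) = 1)
    (ha : ∀ x : ℝ, x < Φ a x) :
    1 ≤ k ∧ ∀ x : ℝ, x < Φ b x := by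
  have happ : ∀ (g h : G) (x : ℝ), Φ (g * h) x = Φ g (Φ h x) := by
    intro g h x; rw [map_mul]; rfl
  -- powers of a move points up
  have hpow : ∀ (j : ℕ) (x : ℝ), x ≤ Φ (a ^ j) x := by
    intro j
    induction j with
    | zero => intro x; simp
    | succ j ih =>
      intro x
      have : Φ (a ^ (j + 1)) x = Φ (a ^ j) (Φ a x) := by
        rw [pow_succ, happ]
      rw [this]
      exact le_trans (le_of_lt (ha x)) (ih (Φ a x))
  have hpow' : ∀ (j : ℕ), 1 ≤ j → ∀ x : ℝ, x < Φ (a ^ j) x := by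
    intro j hj x
    obtain ⟨i, rfl⟩ := Nat.exists_eq_add_of_le hj
    have : Φ (a ^ (1 + i)) x = Φ (a ^ i) (Φ a x) := by
      rw [add_comm, pow_succ, happ]
    rw [this]
    exact lt_of_lt_of_le (ha x) (hpow i (Φ a x))
  -- conjugates of powers of a move points up
  have hconj : ∀ (g : G) (j : ℕ) (x : ℝ), x ≤ Φ (g * a ^ j * g⁻¹) x := by
    intro g j x
    have h1 : Φ (g * a ^ j * g⁻¹) x = Φ g (Φ (a ^ j) (Φ g⁻¹ x)) := by
      rw [happ, happ]
    rw [h1]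
    have h2 : Φ g⁻¹ x ≤ Φ (a ^ j) (Φ g⁻¹ x) := hpow j _
    have h3 : Φ g (Φ g⁻¹ x) ≤ Φ g (Φ (a ^ j) (Φ g⁻¹ x)) := (Φ g).monotone h2
    have h4 : Φ g (Φ g⁻¹ x) = x := by
      rw [← happ]; simp
    linarith
  have hconj' : ∀ (g : G) (j : ℕ), 1 ≤ j → ∀ x : ℝ, x < Φ (g * a ^ j * g⁻¹) x := by
    intro g j hj x
    have h1 : Φ (g * a ^ j * g⁻¹) x = Φ g (Φ (a ^ j) (Φ g⁻¹ x)) := by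
      rw [happ, happ]
    rw [h1]
    have h2 : Φ g⁻¹ x < Φ (a ^ j) (Φ g⁻¹ x) := hpow' j hj _
    have h3 : Φ g (Φ g⁻¹ x) < Φ g (Φ (a ^ j) (Φ g⁻¹ x)) := (Φ g).strictMono h2
    have h4 : Φ g (Φ g⁻¹ x) = x := by
      rw [← happ]; simp
    linarith
  -- rewrite the relation: b^k is a product of two conjugates
  have h2 : (w₁ * a ^ m * w₁⁻¹) * ((b ^ (-r) * w₂⁻¹) * a ^ n * (b ^ (-r) * w₂⁻¹)⁻¹) = b ^ k := by
    calc (w₁ * a ^ m * w₁⁻¹) * ((b ^ (-r) * w₂⁻¹) * a ^ n * (b ^ (-r) * w₂⁻¹)⁻¹)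
        = ((w₁ * a ^ m * w₁⁻¹) * b ^ (-r) * (w₂⁻¹ * a ^ n * w₂) * b ^ (r - k)) * b ^ (k - r) * b ^ r := by
          group
      _ = b ^ k := by rw [hrel]; group
  -- b^k moves every point strictly up
  have hbk : ∀ x : ℝ, x < Φ (b ^ k) x := by
    intro x
    rw [← h2, happ]
    rcases Nat.lt_or_ge m 1 with hm | hm
    · -- m = 0, so n ≥ 1
      have hn : 1 ≤ n := by omega
      have hA : ∀ y, y ≤ Φ (w₁ * a ^ m * w₁⁻¹) y := hconj w₁ m
      have hB : x < Φ ((b ^ (-r) * w₂⁻¹) * a ^ n * (b ^ (-r) * w₂⁻¹)⁻¹) x := hconj' _ n hn x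
      exact lt_of_lt_of_le hB (hA _)
    · have hA : ∀ y, y < Φ (w₁ * a ^ m * w₁⁻¹) y := hconj' w₁ m hm
      have hB : x ≤ Φ ((b ^ (-r) * w₂⁻¹) * a ^ n * (b ^ (-r) * w₂⁻¹)⁻¹) x := hconj _ n x
      exact lt_of_le_of_lt hB (hA _)
  have hk1 : 1 ≤ k := by
    by_contra h
    have hk0 : k = 0 := by omega
    have := hbk 0
    rw [hk0] at this
    simp at this
  refine ⟨hk1, ?_⟩
  intro x
  by_contra h
  push_neg at h
  -- then b^j x ≤ x for all natural j
  have hdown : ∀ j : ℕ, Φ (b ^ j) x ≤ x := by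
    intro j
    induction j with
    | zero => simp
    | succ j ih =>
      have : Φ (b ^ (j + 1)) x = Φ (b ^ j) (Φ b x) := by
        rw [pow_succ, happ]
      rw [this]
      exact le_trans ((Φ (b ^ j)).monotone h) ih
  have hkt : (k.toNat : ℤ) = k := Int.toNat_of_nonneg hk
  have := hbk x
  rw [← hkt, zpow_natCast] at this
  exact absurd (hdown k.toNat) (not_le.mpr this)
end

section
/- Let G be a group generated by two elements a and b, acting on ℝ by orientation-preserving homeomorphisms. Suppose there exist: words w₁, w₂ ∈ G, integers m, n ≥ 0 with m + n ≥ 1, r ∈ ℤ, k ≥ 0; an element w of G that is a product of nonnegative powers of a and b containing at least one b; and integers s, t, p, q with q ≠ 0 and p/q ≥ s + t, such that in G: (i) (w₁ a^m w₁⁻¹) b^{-r} (w₂⁻¹ a^n w₂) b^{r-k} = 1, (ii) a commutes with L := a^{-s} w a^{-t}, and (iii) a^p L^q = 1. Then the action of G has a global fixed point, i.e., there exists x ∈ ℝ fixed by every element of G. -/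
/-!
Suppose `a` had no fixed point, say `x < a x` for all `x`. The first relation writes `b ^ k` as a
product of conjugates of `a ^ m` and `a ^ n`, so `b`, every positive word `w` containing `b`, and
`H = a ^ t * w * a ^ (-t) = a ^ (s + t) * L` all move every point up as well. As `a` commutes with
`L`, the third relation gives `H ^ q = a ^ ((s + t) * q - p)`, and `p / q ≥ s + t` makes the two
sides move points in opposite directions. Hence, by the intermediate value theorem, `a` fixes some
`x`. Then `L ^ q = a ^ (-p)` fixes `x`, hence so do `L` and `w = a ^ s * L * a ^ t`; a word in `a`
and `b` containing `b` can only fix `x` if `b` does. Since `a` and `b` generate `G`, `x` is a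
global fixed point.
-/

open MulAction OrderDual

theorem mul_sub_mul_nonpos_of_le_div {K : Type*} [Field K] [LinearOrder K] [IsStrictOrderedRing K]
    {x p q : K} (h : x ≤ p / q) : (x * q - p) * q ≤ 0 := by
  rcases eq_or_ne q 0 with rfl | hq
  · simp
  have : (x * q - p) * q = (x - p / q) * q ^ 2 := by field_simp
  rw [this]
  exact mul_nonpos_of_nonpos_of_nonneg (sub_nonpos.2 h) (sq_nonneg q)

theorem conj_zpow_eq_zpow_of_commute {G : Type*} [Group G] {a w L : G} {s t p q : ℤ}
    (hL : L = a ^ (-s) * w * a ^ (-t)) (hc : Commute a L) (hrel : a ^ p * L ^ q = 1) :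
    (a ^ t * w * (a ^ t)⁻¹) ^ q = a ^ ((s + t) * q - p) := by
  have hconj : a ^ t * w * (a ^ t)⁻¹ = a ^ (s + t) * L := by rw [hL]; group
  rw [hconj, ((hc.zpow_left (s + t)).mul_zpow q), ← zpow_mul, eq_inv_of_mul_eq_one_right hrel,
    ← zpow_neg, ← zpow_add, sub_eq_add_neg]

namespace OrderIso

variable {α : Type*}

instance [LE α] : IsOneApplyEqSelf (α ≃o α) α := ⟨fun _ => rfl⟩

instance [LE α] : IsMulApplyEqComp (α ≃o α) α := ⟨fun _ _ _ => rfl⟩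

-- `IsPositive (dualHom f)` says that `f x < x` for all `x`; through `dualHom`, facts about
-- positive elements apply to negative ones.
def dualHom [LE α] : (α ≃o α) →* (αᵒᵈ ≃o αᵒᵈ) where
  toFun := OrderIso.dual
  map_one' := rfl
  map_mul' _ _ := rfl

section LinearOrder

variable [LinearOrder α] {f g : α ≃o α} {x : α}

theorem pow_mem_stabilizer_iff {n : ℕ} (hn : n ≠ 0) :
    f ^ n ∈ stabilizer (α ≃o α) x ↔ f ∈ stabilizer (α ≃o α) x := by
  simpa using (Function.Commute.id_right (f := ⇑f)).iterate_pos_eq_iff_map_eq f.monotone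
    strictMono_id (Nat.pos_of_ne_zero hn) (x := x)

theorem zpow_mem_stabilizer_iff {q : ℤ} (hq : q ≠ 0) :
    f ^ q ∈ stabilizer (α ≃o α) x ↔ f ∈ stabilizer (α ≃o α) x := by
  obtain ⟨n, rfl | rfl⟩ := Int.eq_nat_or_neg q
  · rw [zpow_natCast, pow_mem_stabilizer_iff (by omega)]
  · rw [zpow_neg, inv_mem_iff, zpow_natCast, pow_mem_stabilizer_iff (by omega)]

theorem le_list_prod_apply {l : List (α ≃o α)} (h : ∀ f ∈ l, x ≤ f x) : x ≤ l.prod x := by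
  induction l with
  | nil => exact le_rfl
  | cons f l ih =>
    rw [List.forall_mem_cons] at h
    exact h.1.trans (f.monotone (ih h.2))

theorem lt_list_prod_apply {l : List (α ≃o α)} (hle : ∀ f ∈ l, x ≤ f x)
    (hlt : ∃ f ∈ l, x < f x) : x < l.prod x := by
  induction l with
  | nil => simp at hlt
  | cons f l ih =>
    rw [List.forall_mem_cons] at hle
    rw [List.prod_cons, mul_apply_eq_comp]
    rcases List.or_exists_of_exists_mem_cons hlt with hf | hl
    · exact hf.trans_le (f.monotone (le_list_prod_apply hle.2))
    · exact hle.1.trans_lt (f.strictMono (ih hle.2 hl))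

theorem apply_eq_self_of_list_prod_apply_eq_self {l : List (α ≃o α)}
    (hl : ∀ f ∈ l, f x = x ∨ f = g) (hg : g ∈ l) (hprod : l.prod x = x) : g x = x := by
  by_contra hne
  rcases lt_or_gt_of_ne hne with hlt | hgt
  · have := lt_list_prod_apply (l := l.map dualHom) (x := toDual x)
      (List.forall_mem_map.2 fun f hf => ?_) ⟨dualHom g, List.mem_map_of_mem hg, hlt⟩
    rw [← map_list_prod] at this
    · exact this.ne' (congrArg toDual hprod)
    rcases hl f hf with hfx | rfl
    exacts [hfx.le, hlt.le]
  · refine (lt_list_prod_apply (fun f hf => ?_) ⟨g, hg, hgt⟩).ne' hprod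
    rcases hl f hf with hfx | rfl
    exacts [hfx.ge, hgt.le]

def IsPositive (f : α ≃o α) : Prop := ∀ x, x < f x

theorem not_isPositive_one [Nonempty α] : ¬ IsPositive (1 : α ≃o α) :=
  fun h => lt_irrefl _ (h (Classical.arbitrary α))

theorem isPositive_pow_iff {n : ℕ} (hn : n ≠ 0) : IsPositive (f ^ n) ↔ IsPositive f := by
  simp only [IsPositive, pow_apply_eq_iterate]
  refine forall_congr' fun x => ?_
  simpa using (Function.Commute.id_left (f := ⇑f)).iterate_pos_lt_iff_map_lt monotone_id
    f.strictMono (Nat.pos_of_ne_zero hn) (x := x)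

namespace IsPositive

theorem mul (hf : IsPositive f) (hg : IsPositive g) : IsPositive (f * g) :=
  fun x => (hg x).trans (hf (g x))

theorem conj (hf : IsPositive f) (g : α ≃o α) : IsPositive (g * f * g⁻¹) := fun x => by
  simpa using g.strictMono (hf (g⁻¹ x))

theorem le_pow_apply (hf : IsPositive f) (n : ℕ) (x : α) : x ≤ (f ^ n) x := by
  rcases eq_or_ne n 0 with rfl | hn
  · simp
  · exact ((isPositive_pow_iff hn).2 hf x).le

theorem conj_pow_mul_conj_pow (hf : IsPositive f) {m n : ℕ} (hmn : m + n ≠ 0)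
    (g₁ g₂ : α ≃o α) : IsPositive (g₁ * f ^ m * g₁⁻¹ * (g₂ * f ^ n * g₂⁻¹)) := by
  rcases eq_or_ne m 0 with rfl | hm
  · simpa using ((isPositive_pow_iff (by omega)).2 hf).conj g₂
  rcases eq_or_ne n 0 with rfl | hn
  · simpa using ((isPositive_pow_iff hm).2 hf).conj g₁
  exact (((isPositive_pow_iff hm).2 hf).conj g₁).mul (((isPositive_pow_iff hn).2 hf).conj g₂)

theorem zpow_ne_zpow [Nonempty α] (hf : IsPositive f) (hg : IsPositive g) {q e : ℤ} (hq : q ≠ 0)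
    (he : e * q ≤ 0) : f ^ q ≠ g ^ e := by
  wlog hq₀ : 0 < q generalizing q e
  · rw [Ne, ← inv_inj, ← zpow_neg, ← zpow_neg]
    exact this (neg_ne_zero.2 hq) (by linarith) (by omega)
  obtain ⟨i, rfl⟩ := Int.eq_ofNat_of_zero_le hq₀.le
  obtain ⟨j, rfl⟩ := Int.exists_eq_neg_ofNat (nonpos_of_mul_nonpos_left he hq₀)
  intro h
  rw [zpow_natCast, zpow_neg, zpow_natCast, eq_inv_iff_mul_eq_one] at h
  obtain ⟨x⟩ := ‹Nonempty α›
  have := (isPositive_pow_iff (n := i) (by omega)).2 hf ((g ^ j) x)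
  rw [← mul_apply_eq_comp, h] at this
  exact (hg.le_pow_apply j x).not_gt this

end IsPositive

theorem exists_apply_eq_self_or_isPositive_or_isPositive_dual [TopologicalSpace α]
    [OrderTopology α] [PreconnectedSpace α] (f : α ≃o α) :
    (∃ x, f x = x) ∨ IsPositive f ∨ IsPositive (dualHom f) := by
  by_cases hfix : ∃ x, f x = x
  · exact .inl hfix
  push Not at hfix
  by_cases hup : ∃ x, x < f x
  · obtain ⟨x, hx⟩ := hup
    refine .inr (.inl fun y => lt_of_not_ge fun hy => ?_)
    obtain ⟨z, hz⟩ := intermediate_value_univ₂ f.continuous continuous_id hy hx.le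
    exact hfix z hz
  · push Not at hup
    exact .inr (.inr fun y => (hup (ofDual y)).lt_of_ne (hfix _))

end LinearOrder

section Relations

variable {α G : Type*} [LinearOrder α] [Group G]

theorem not_isPositive_of_relations [Nonempty α] (Φ : G →* α ≃o α) {a b c₁ c₂ d : G}
    {l : List G} {m n k : ℕ} {q e : ℤ} (hmn : m + n ≠ 0)
    (hbk : b ^ k = c₁ * a ^ m * c₁⁻¹ * (c₂ * a ^ n * c₂⁻¹))
    (hl : ∀ c ∈ l, c = a ∨ c = b) (hbl : b ∈ l)
    (hq : q ≠ 0) (he : e * q ≤ 0) (hH : (d * l.prod * d⁻¹) ^ q = a ^ e) :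
    ¬ IsPositive (Φ a) := by
  intro ha
  have hbk' : IsPositive (Φ b ^ k) := by
    rw [← map_pow, hbk]
    simpa using ha.conj_pow_mul_conj_pow hmn (Φ c₁) (Φ c₂)
  have hk : k ≠ 0 := by
    rintro rfl
    exact not_isPositive_one (by simpa using hbk')
  have hb : IsPositive (Φ b) := (isPositive_pow_iff hk).1 hbk'
  have hw : IsPositive (Φ l.prod) := fun x => by
    rw [map_list_prod]
    refine lt_list_prod_apply (List.forall_mem_map.2 fun c hc => ?_)
      ⟨Φ b, List.mem_map_of_mem hbl, hb x⟩
    rcases hl c hc with rfl | rfl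
    exacts [(ha x).le, (hb x).le]
  exact (hw.conj (Φ d)).zpow_ne_zpow ha hq he (by simpa using congrArg Φ hH)

theorem mem_stabilizer_of_relations (Φ : G →* α ≃o α) {a b L : G} {l : List G} {s t p q : ℤ}
    {x : α} (hl : ∀ c ∈ l, c = a ∨ c = b) (hbl : b ∈ l) (hq : q ≠ 0)
    (hL : L = a ^ (-s) * l.prod * a ^ (-t)) (hrel : a ^ p * L ^ q = 1)
    (ha : a ∈ (stabilizer (α ≃o α) x).comap Φ) : b ∈ (stabilizer (α ≃o α) x).comap Φ := by
  set S := (stabilizer (α ≃o α) x).comap Φ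
  have hLS : L ∈ S := by
    have : L ^ q ∈ S := by
      rw [eq_inv_of_mul_eq_one_right hrel]
      exact S.inv_mem (S.zpow_mem ha p)
    rwa [Subgroup.mem_comap, map_zpow, zpow_mem_stabilizer_iff hq] at this
  have hwS : l.prod ∈ S := by
    have : l.prod = a ^ s * L * a ^ t := by rw [hL]; group
    rw [this]
    exact S.mul_mem (S.mul_mem (S.zpow_mem ha s) hLS) (S.zpow_mem ha t)
  refine apply_eq_self_of_list_prod_apply_eq_self (l := l.map Φ) (fun f hf => ?_)
    (List.mem_map_of_mem hbl) (by rw [← map_list_prod]; exact hwS)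
  obtain ⟨c, hc, rfl⟩ := List.mem_map.1 hf
  rcases hl c hc with rfl | rfl
  exacts [.inl ha, .inr rfl]

end Relations

end OrderIso

open OrderIso in
/-- Under the generalized Baumslag-Solitar relator, the commuting
meridian/longitude relations and `a^p L^q = 1` with `q ≠ 0` and `p/q ≥ s + t`,
every action of `G = ⟨a, b⟩` on `ℝ` by orientation-preserving homeomorphisms
has a global fixed point. -/
theorem stmt6 {G : Type*} [Group G] (a b : G)
    (hgen : Subgroup.closure ({a, b} : Set G) = ⊤)
    (Φ : G →* (ℝ ≃o ℝ))
    (w₁ w₂ : G) (m n : ℕ) (hmn : 1 ≤ m + n) (r k : ℤ) (hk : 0 ≤ k)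
    (w : G) (l : List G) (hl : ∀ c ∈ l, c = a ∨ c = b) (hbl : b ∈ l)
    (hw : w = l.prod)
    (s t p q : ℤ) (hq : q ≠ 0) (hpq : (s + t : ℚ) ≤ (p : ℚ) / (q : ℚ))
    (L : G) (hL : L = a ^ (-s) * w * a ^ (-t))
    (hrel₁ : (w₁ * a ^ m * w₁⁻¹) * b ^ (-r) * (w₂⁻¹ * a ^ n * w₂) * b ^ (r - k) = 1)
    (hrel₂ : a * L = L * a)
    (hrel₃ : a ^ p * L ^ q = 1) :
    ∃ x : ℝ, ∀ g : G, Φ g x = x := by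
  subst hw
  obtain ⟨k, rfl⟩ := Int.eq_ofNat_of_zero_le hk
  have hbk : b ^ k = w₁ * a ^ m * w₁⁻¹ * ((b ^ (-r) * w₂⁻¹) * a ^ n * (b ^ (-r) * w₂⁻¹)⁻¹) := by
    calc b ^ k
        = (w₁ * a ^ m * w₁⁻¹) * b ^ (-r) * (w₂⁻¹ * a ^ n * w₂) * b ^ (r - k) * b ^ (k : ℤ) := by
          rw [hrel₁, one_mul, zpow_natCast]
      _ = _ := by group
  have hH := conj_zpow_eq_zpow_of_commute hL hrel₂ hrel₃
  have he : ((s + t) * q - p) * q ≤ 0 := by exact_mod_cast mul_sub_mul_nonpos_of_le_div hpq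
  obtain ⟨x, hx⟩ : ∃ x, Φ a x = x := by
    rcases exists_apply_eq_self_or_isPositive_or_isPositive_dual (Φ a) with h | h | h
    · exact h
    · exact absurd h (not_isPositive_of_relations Φ (by omega) hbk hl hbl hq he hH)
    · exact absurd h
        (not_isPositive_of_relations (dualHom.comp Φ) (by omega) hbk hl hbl hq he hH)
  have hb := mem_stabilizer_of_relations Φ hl hbl hq hL hrel₃ (x := x) hx
  refine ⟨x, fun g => ?_⟩
  have hle : Subgroup.closure {a, b} ≤ (stabilizer (ℝ ≃o ℝ) x).comap Φ :=
    Subgroup.closure_le _ |>.2 (Set.insert_subset hx (Set.singleton_subset_iff.2 hb))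
  exact hle (hgen ▸ Subgroup.mem_top g)
end

section
/- A countable group G is left-orderable if and only if G is nontrivial and embeds as a subgroup of the group of orientation-preserving homeomorphisms of ℝ. -/
/-!
A left order on a countable group `G` makes `G` act faithfully, by left translation in the first
coordinate, on the countable dense unbounded order `G ×ₗ ℚ`, which Cantor's theorem identifies
with `ℚ`; every order automorphism of `ℚ` extends uniquely to one of `ℝ`, giving the embedding.
Conversely, if `G` acts faithfully on `ℝ` by order automorphisms, comparing `g` and `h`
lexicographically along a dense sequence `xₙ` (at the first `n` with `g xₙ ≠ h xₙ`) is a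
left-invariant total order, because the automorphisms are determined by their values on a dense set.
-/

/-- A (nontrivial) group is left-orderable if it admits a left-invariant
strict total order; by convention the trivial group is not left-orderable. -/
def IsLeftOrderable (G : Type*) [Group G] : Prop :=
  Nontrivial G ∧ ∃ lt : G → G → Prop,
    IsStrictTotalOrder G lt ∧ ∀ f g h : G, lt g h → lt (f * g) (f * h)

open Function TopologicalSpace

theorem isLeftOrderable_iff {G : Type*} [Group G] :
    IsLeftOrderable G ↔ Nontrivial G ∧ ∃ _ : LinearOrder G, MulLeftStrictMono G := by
  constructor
  · rintro ⟨hG, lt, hlt, hmul⟩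
    classical
    exact ⟨hG, linearOrderOfSTO lt, ⟨fun f _ _ => hmul f _ _⟩⟩
  · rintro ⟨hG, _, _⟩
    exact ⟨hG, (· < ·), inferInstance, fun f _ _ => (mul_lt_mul_right · f)⟩

def OrderIso.autCongr {α β : Type*} [LE α] [LE β] (e : α ≃o β) : (α ≃o α) ≃* (β ≃o β) where
  toFun f := (e.symm.trans f).trans e
  invFun f := (e.trans f).trans e.symm
  left_inv f := by ext; simp
  right_inv f := by ext; simp
  map_mul' f g := by ext; simp [RelIso.mul_apply]

section LexProduct

variable (G α : Type*) [Group G] [Preorder G] [MulLeftMono G] [Preorder α]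

def mulLeftLex : G →* (G ×ₗ α ≃o G ×ₗ α) where
  toFun g := Prod.Lex.prodLexCongr (OrderIso.mulLeft g) (OrderIso.refl α)
  map_one' := by ext; simp [RelIso.one_apply, Prod.map]
  map_mul' g h := by ext; simp [RelIso.mul_apply, Prod.map, mul_assoc]

theorem mulLeftLex_injective [Nonempty α] : Injective (mulLeftLex G α) := by
  intro g h hgh
  obtain ⟨a⟩ := ‹Nonempty α›
  simpa [mulLeftLex] using congrArg (fun f => (ofLex (f (toLex (1, a)))).1) hgh

end LexProduct

theorem exists_injective_hom_orderIso_rat (G : Type*) [Group G] [Countable G] [LinearOrder G]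
    [MulLeftStrictMono G] : ∃ Φ : G →* (ℚ ≃o ℚ), Injective Φ := by
  have := mulLeftMono_of_mulLeftStrictMono G
  have : Countable (G ×ₗ ℚ) := inferInstanceAs (Countable (G × ℚ))
  obtain ⟨e⟩ := Order.iso_of_countable_dense (G ×ₗ ℚ) ℚ
  exact ⟨e.autCongr.toMonoidHom.comp (mulLeftLex G ℚ),
    e.autCongr.injective.comp (mulLeftLex_injective G ℚ)⟩

namespace OrderIso

noncomputable def extendReal (f : ℚ ≃o ℚ) (x : ℝ) : ℝ :=
  sSup ((fun q => (f q : ℝ)) '' {q : ℚ | (q : ℝ) < x})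

theorem ratCast_lt_extendReal_iff (f : ℚ ≃o ℚ) (p : ℚ) (x : ℝ) :
    ((f p : ℚ) : ℝ) < extendReal f x ↔ (p : ℝ) < x := by
  obtain ⟨q₀, hq₀⟩ := exists_rat_lt x
  obtain ⟨r, hr⟩ := exists_rat_gt x
  have hbdd : BddAbove ((fun q => (f q : ℝ)) '' {q : ℚ | (q : ℝ) < x}) := by
    refine ⟨f r, ?_⟩
    rintro _ ⟨q, hq, rfl⟩
    change (f q : ℝ) ≤ f r
    exact_mod_cast f.monotone (by exact_mod_cast (hq : (q : ℝ) < x).trans hr : q < r).le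
  rw [extendReal, lt_csSup_iff hbdd ⟨_, q₀, hq₀, rfl⟩]
  simp only [Set.mem_image, Set.mem_ofPred_eq, exists_exists_and_eq_and, Rat.cast_lt, f.lt_iff_lt]
  constructor
  · rintro ⟨q, hqx, hpq⟩
    exact (Rat.cast_lt.2 hpq).trans hqx
  · intro hpx
    obtain ⟨q, hpq, hqx⟩ := exists_rat_btwn hpx
    exact ⟨q, hqx, Rat.cast_lt.1 hpq⟩

theorem extendReal_eq_of_forall {f : ℚ ≃o ℚ} {x y : ℝ}
    (h : ∀ p : ℚ, ((f p : ℚ) : ℝ) < y ↔ (p : ℝ) < x) : extendReal f x = y :=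
  eq_of_forall_rat_lt_iff_lt fun q => by
    obtain ⟨p, rfl⟩ := f.surjective q
    rw [ratCast_lt_extendReal_iff, h]

theorem extendReal_ratCast (f : ℚ ≃o ℚ) (q : ℚ) : extendReal f q = f q :=
  extendReal_eq_of_forall fun p => by norm_cast; exact f.lt_iff_lt

theorem extendReal_one (x : ℝ) : extendReal 1 x = x :=
  extendReal_eq_of_forall fun _ => Iff.rfl

theorem extendReal_mul (f g : ℚ ≃o ℚ) (x : ℝ) :
    extendReal (f * g) x = extendReal f (extendReal g x) :=
  extendReal_eq_of_forall fun p => by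
    rw [RelIso.mul_apply, ratCast_lt_extendReal_iff, ratCast_lt_extendReal_iff]

theorem strictMono_extendReal (f : ℚ ≃o ℚ) : StrictMono (extendReal f) := by
  intro x y hxy
  obtain ⟨p, hxp, hpy⟩ := exists_rat_btwn hxy
  have hle : extendReal f x ≤ f p :=
    not_lt.1 fun h => ((ratCast_lt_extendReal_iff f p x).1 h).not_gt hxp
  exact hle.trans_lt ((ratCast_lt_extendReal_iff f p y).2 hpy)

noncomputable def extendRealHom : (ℚ ≃o ℚ) →* (ℝ ≃o ℝ) where
  toFun f := (strictMono_extendReal f).orderIsoOfSurjective _ fun y =>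
    ⟨extendReal f⁻¹ y, by rw [← extendReal_mul, mul_inv_cancel, extendReal_one]⟩
  map_one' := by ext; exact extendReal_one _
  map_mul' f g := by ext; exact extendReal_mul f g _

theorem extendRealHom_apply (f : ℚ ≃o ℚ) (x : ℝ) : extendRealHom f x = extendReal f x := rfl

theorem extendRealHom_injective : Injective extendRealHom := by
  intro f g hfg
  ext q
  have := DFunLike.congr_fun hfg (q : ℝ)
  rwa [extendRealHom_apply, extendRealHom_apply, extendReal_ratCast, extendReal_ratCast,
    Rat.cast_inj] at this

theorem ext_of_denseRange {X ι : Type*} [TopologicalSpace X] [LinearOrder X] [OrderTopology X]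
    {s : ι → X} (hs : DenseRange s) {f g : X ≃o X} (h : f ∘ s = g ∘ s) : f = g :=
  OrderIso.ext (hs.equalizer f.continuous g.continuous h)

end OrderIso

theorem StrictMono.toLex_comp_lt_toLex_comp {ι α β : Type*} [LT ι] [Preorder α] [Preorder β]
    {φ : α → β} (hφ : StrictMono φ) {x y : ι → α} (h : toLex x < toLex y) :
    toLex (φ ∘ x) < toLex (φ ∘ y) :=
  let ⟨i, hj, hi⟩ := h
  ⟨i, fun j hji => congrArg φ (hj j hji), hφ hi⟩

theorem isLeftOrderable_of_injective_orbit {G X ι : Type*} [Group G] [Nontrivial G]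
    [LinearOrder X] [LinearOrder ι] [WellFoundedLT ι] (ρ : G →* (X ≃o X)) (s : ι → X)
    (hs : Injective fun g => ρ g ∘ s) : IsLeftOrderable G := by
  let F : G → Lex (ι → X) := fun g => toLex (ρ g ∘ s)
  let : LinearOrder G := LinearOrder.lift' F hs
  refine isLeftOrderable_iff.2 ⟨‹_›, this, ⟨fun f a b (hab : F a < F b) => ?_⟩⟩
  change F (f * a) < F (f * b)
  simpa only [F, map_mul, RelIso.coe_mul, comp_assoc] using
    (ρ f).strictMono.toLex_comp_lt_toLex_comp hab

theorem isLeftOrderable_of_injective_hom_orderIso {G X : Type*} [Group G] [Nontrivial G]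
    [TopologicalSpace X] [LinearOrder X] [OrderTopology X] [SeparableSpace X] [Nonempty X]
    (ρ : G →* (X ≃o X)) (hρ : Injective ρ) : IsLeftOrderable G :=
  isLeftOrderable_of_injective_orbit ρ (denseSeq X) fun _ _ h =>
    hρ (OrderIso.ext_of_denseRange (denseRange_denseSeq X) h)

/-- A countable group is left-orderable iff it is nontrivial and
embeds into the group of orientation-preserving homeomorphisms of `ℝ`. -/
theorem stmt7 (G : Type*) [Group G] [Countable G] :
    IsLeftOrderable G ↔
      Nontrivial G ∧ ∃ Φ : G →* (ℝ ≃o ℝ), Function.Injective Φ := by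
  constructor
  · intro hG
    obtain ⟨hnt, _, _⟩ := isLeftOrderable_iff.1 hG
    obtain ⟨Φ, hΦ⟩ := exists_injective_hom_orderIso_rat G
    exact ⟨hnt, OrderIso.extendRealHom.comp Φ, OrderIso.extendRealHom_injective.comp hΦ⟩
  · rintro ⟨_, Φ, hΦ⟩
    exact isLeftOrderable_of_injective_hom_orderIso Φ hΦ
end

section
/- Let G be a countable group generated by elements a and b satisfying relations (i) (w₁ a^m w₁⁻¹) b^{-r} (w₂⁻¹ a^n w₂) b^{r-k} = 1, (ii) a L = L a where L = a^{-s} w a^{-t}, and (iii) a^p L^q = 1, where w₁, w₂ ∈ G are arbitrary, m, n ≥ 0 with m + n ≥ 1, r ∈ ℤ, k ≥ 0, w is a product of nonnegative powers of a and b containing at least one b, and s, t, p, q ∈ ℤ with q ≠ 0 and p/q ≥ s + t. Then G is not left-orderable. -/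
open Set

instance OrderDual.covariantClass_smul_le {G X : Type*} [SMul G X] [LE X]
    [CovariantClass G X HSMul.hSMul LE.le] : CovariantClass G Xᵒᵈ HSMul.hSMul LE.le :=
  ⟨fun g _ _ h => @CovariantClass.elim G X HSMul.hSMul LE.le _ g _ _ h⟩

theorem OrderHom.exists_isFixedPt_mem_Icc {X : Type*} [CompleteLattice X] (f : X →o X)
    {U V : X} (hUV : U ≤ V) (hU : U ≤ f U) (hV : f V ≤ V) :
    ∃ x ∈ Icc U V, Function.IsFixedPt f x :=
  ⟨f.nextFixed U hU, ⟨f.le_nextFixed hU, OrderHom.lfp_le _ (sup_le hUV hV)⟩,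
    (f.nextFixed U hU).2⟩

section LinearOrder

variable {G X : Type*} [Group G] [LinearOrder X] [MulAction G X]
  [CovariantClass G X HSMul.hSMul LE.le] {a b g : G} {x : X}

theorem smul_strictMono_right' (g : G) : StrictMono (g • · : X → X) :=
  (smul_mono_right g).strictMono_of_injective (MulAction.injective g)

theorem strictMono_zpow_smul (h : x < g • x) : StrictMono fun z : ℤ => g ^ z • x :=
  strictMono_int_of_lt_succ fun z => by
    simpa only [zpow_add_one, mul_smul] using smul_strictMono_right' (g ^ z) h

theorem lt_zpow_smul_iff (h : x < g • x) {z : ℤ} : x < g ^ z • x ↔ 0 < z := by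
  simpa using (strictMono_zpow_smul h).lt_iff_lt (a := 0) (b := z)

theorem zpow_smul_lt_iff (h : x < g • x) {z : ℤ} : g ^ z • x < x ↔ z < 0 := by
  simpa using (strictMono_zpow_smul h).lt_iff_lt (a := z) (b := 0)

theorem lt_pow_smul (h : x < g • x) {n : ℕ} (hn : n ≠ 0) : x < g ^ n • x := by
  simpa using (lt_zpow_smul_iff h (z := n)).2 (by omega)

theorem smul_eq_of_zpow_smul_eq {z : ℤ} (hz : z ≠ 0) (h : g ^ z • x = x) : g • x = x := by
  by_contra hne
  rcases lt_or_gt_of_ne hne with hlt | hlt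
  · exact hz ((strictMono_zpow_smul (x := OrderDual.toDual x) hlt).injective
      (by rw [zpow_zero, one_smul]; exact h))
  · exact hz ((strictMono_zpow_smul hlt).injective (by rwa [zpow_zero, one_smul]))

theorem lt_smul_of_lt_zpow_smul {k : ℤ} (hk : 0 ≤ k) (h : x < g ^ k • x) : x < g • x := by
  lift k to ℕ using hk
  by_contra! hle
  exact (pow_smul_le hle k).not_gt (by simpa using h)

theorem le_list_prod_smul {l : List G} (hl : ∀ c ∈ l, x ≤ c • x) : x ≤ l.prod • x := by
  induction l with
  | nil => simp
  | cons c l ih =>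
    rw [List.forall_mem_cons] at hl
    rw [List.prod_cons, mul_smul]
    exact hl.1.trans (smul_mono_right c (ih hl.2))

theorem lt_list_prod_smul {l : List G} (hl : ∀ c ∈ l, x ≤ c • x) (hb : b ∈ l)
    (hbx : x < b • x) : x < l.prod • x := by
  induction l with
  | nil => simp at hb
  | cons c l ih =>
    rw [List.forall_mem_cons] at hl
    rw [List.prod_cons, mul_smul]
    rcases List.mem_cons.1 hb with rfl | hb
    · exact hbx.trans_le (smul_mono_right b (le_list_prod_smul hl.2))
    · exact hl.1.trans_lt (smul_strictMono_right' c (ih hl.2 hb))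

theorem lt_list_prod_smul_of_smul_eq {l : List G} (hl : ∀ c ∈ l, c = a ∨ c = b) (hb : b ∈ l)
    (hax : a • x = x) (hbx : x < b • x) : x < l.prod • x :=
  lt_list_prod_smul (fun c hc => by rcases hl c hc with rfl | rfl; exacts [hax.ge, hbx.le]) hb hbx

theorem forall_smul_eq_of_smul_eq (hgen : Subgroup.closure {a, b} = ⊤) {l : List G}
    (hl : ∀ c ∈ l, c = a ∨ c = b) (hb : b ∈ l) {P q : ℤ} (hq : q ≠ 0)
    (hPw : a ^ P * l.prod ^ q = 1) (hax : a • x = x) (g : G) : g • x = x := by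
  have ha : a ∈ MulAction.stabilizer G x := hax
  have hw : l.prod • x = x := by
    refine smul_eq_of_zpow_smul_eq hq ?_
    rw [eq_inv_of_mul_eq_one_right hPw]
    exact inv_mem (zpow_mem ha P)
  have hbx : b • x = x := by
    by_contra hne
    rcases lt_or_gt_of_ne hne with hlt | hlt
    · exact (lt_list_prod_smul_of_smul_eq (x := OrderDual.toDual x) hl hb hax hlt).ne' hw
    · exact (lt_list_prod_smul_of_smul_eq hl hb hax hlt).ne' hw
  have hle : Subgroup.closure {a, b} ≤ MulAction.stabilizer G x :=
    (Subgroup.closure_le _).2 (by rintro c (rfl | rfl) <;> assumption)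
  exact hle (hgen ▸ Subgroup.mem_top g)

theorem mul_neg_of_zpow_mul_zpow_eq_one {w : G} {P q : ℤ} (hax : x < a • x) (hwx : x < w • x)
    (hq : q ≠ 0) (hPw : a ^ P * w ^ q = 1) : P * q < 0 := by
  have hwq : w ^ q • x = a ^ (-P) • x := by rw [eq_inv_of_mul_eq_one_right hPw, zpow_neg]
  rcases hq.lt_or_gt with hq | hq
  · have : -P < 0 := (zpow_smul_lt_iff hax).1 (hwq ▸ (zpow_smul_lt_iff hwx).2 hq)
    nlinarith
  · have : 0 < -P := (lt_zpow_smul_iff hax).1 (hwq ▸ (lt_zpow_smul_iff hwx).2 hq)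
    nlinarith

end LinearOrder

section CompleteLinearOrder

variable {G X : Type*} [Group G] [CompleteLinearOrder X] [MulAction G X]
  [CovariantClass G X HSMul.hSMul LE.le] {a b : G} {x : X}

theorem smul_mem_Ioo_bot_top (g : G) (hx : x ∈ Ioo (⊥ : X) ⊤) : g • x ∈ Ioo (⊥ : X) ⊤ := by
  have hbot : g • (⊥ : X) = ⊥ :=
    le_bot_iff.1 (by simpa using smul_mono_right g (bot_le : ⊥ ≤ g⁻¹ • (⊥ : X)))
  have htop : g • (⊤ : X) = ⊤ :=
    top_le_iff.1 (by simpa using smul_mono_right g (le_top : g⁻¹ • (⊤ : X) ≤ ⊤))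
  exact ⟨hbot ▸ smul_strictMono_right' g hx.1, htop ▸ smul_strictMono_right' g hx.2⟩

theorem forall_lt_smul_or_forall_smul_lt (ha : ∀ x ∈ Ioo (⊥ : X) ⊤, a • x ≠ x) :
    (∀ x ∈ Ioo (⊥ : X) ⊤, x < a • x) ∨ ∀ x ∈ Ioo (⊥ : X) ⊤, a • x < x := by
  by_contra! h
  obtain ⟨⟨U, hU, hUa⟩, V, hV, hVa⟩ := h
  rcases le_total V U with hVU | hUV
  · obtain ⟨y, hy, hay⟩ :=
      OrderHom.exists_isFixedPt_mem_Icc ⟨(a • ·), smul_mono_right a⟩ hVU hVa hUa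
    exact ha y ⟨hV.1.trans_le hy.1, hy.2.trans_lt hU.2⟩ hay
  · obtain ⟨y, hy, hay⟩ := OrderHom.exists_isFixedPt_mem_Icc ⟨(a⁻¹ • ·), smul_mono_right a⁻¹⟩
      hUV (by simpa using smul_mono_right a⁻¹ hUa) (by simpa using smul_mono_right a⁻¹ hVa)
    exact ha y ⟨hU.1.trans_le hy.1, hy.2.trans_lt hV.2⟩ (inv_smul_eq_iff.1 hay).symm

theorem lt_smul_of_conj_mul_conj_eq_zpow (ha : ∀ x ∈ Ioo (⊥ : X) ⊤, x < a • x)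
    {g₁ g₂ : G} {m n : ℕ} (hmn : 1 ≤ m + n) {k : ℤ} (hk : 0 ≤ k)
    (hrel : (g₁ * a ^ m * g₁⁻¹) * (g₂ * a ^ n * g₂⁻¹) = b ^ k) (hx : x ∈ Ioo (⊥ : X) ⊤) :
    x < b • x := by
  have hconj (g : G) {y : X} (hy : y ∈ Ioo (⊥ : X) ⊤) : y < (g * a * g⁻¹) • y := by
    simpa [mul_smul] using smul_strictMono_right' g (ha _ (smul_mem_Ioo_bot_top g⁻¹ hy))
  refine lt_smul_of_lt_zpow_smul hk ?_
  rw [← hrel, ← conj_pow, ← conj_pow, mul_smul]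
  have hy := smul_mem_Ioo_bot_top ((g₂ * a * g₂⁻¹) ^ n) hx
  rcases Nat.eq_zero_or_pos n with rfl | hn
  · simpa using lt_pow_smul (hconj g₁ hx) (by omega : m ≠ 0)
  · exact (lt_pow_smul (hconj g₂ hx) hn.ne').trans_le (le_pow_smul (hconj g₁ hy).le m)

theorem not_forall_lt_smul {g₁ g₂ : G} {m n : ℕ} (hmn : 1 ≤ m + n) {k : ℤ} (hk : 0 ≤ k)
    (hrel : (g₁ * a ^ m * g₁⁻¹) * (g₂ * a ^ n * g₂⁻¹) = b ^ k) {l : List G}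
    (hl : ∀ c ∈ l, c = a ∨ c = b) (hb : b ∈ l) {P q : ℤ} (hq : q ≠ 0) (hPq : 0 ≤ P * q)
    (hPw : a ^ P * l.prod ^ q = 1) (hx : x ∈ Ioo (⊥ : X) ⊤) :
    ¬ ∀ y ∈ Ioo (⊥ : X) ⊤, y < a • y := by
  intro ha
  have hbx := lt_smul_of_conj_mul_conj_eq_zpow ha hmn hk hrel hx
  have hwx : x < l.prod • x :=
    lt_list_prod_smul (fun c hc => by rcases hl c hc with rfl | rfl; exacts [(ha x hx).le, hbx.le])
      hb hbx
  exact (mul_neg_of_zpow_mul_zpow_eq_one (ha x hx) hwx hq hPw).not_ge hPq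

theorem exists_mem_Ioo_forall_smul_eq {g₁ g₂ : G} {m n : ℕ} (hmn : 1 ≤ m + n) {k : ℤ}
    (hk : 0 ≤ k) (hrel : (g₁ * a ^ m * g₁⁻¹) * (g₂ * a ^ n * g₂⁻¹) = b ^ k)
    (hgen : Subgroup.closure {a, b} = ⊤) {l : List G} (hl : ∀ c ∈ l, c = a ∨ c = b) (hb : b ∈ l)
    {P q : ℤ} (hq : q ≠ 0) (hPq : 0 ≤ P * q) (hPw : a ^ P * l.prod ^ q = 1)
    (hX : (Ioo (⊥ : X) ⊤).Nonempty) : ∃ x ∈ Ioo (⊥ : X) ⊤, ∀ g : G, g • x = x := by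
  by_cases hfix : ∃ x ∈ Ioo (⊥ : X) ⊤, a • x = x
  · obtain ⟨x, hx, hax⟩ := hfix
    exact ⟨x, hx, forall_smul_eq_of_smul_eq hgen hl hb hq hPw hax⟩
  push Not at hfix
  obtain ⟨x, hx⟩ := hX
  rcases forall_lt_smul_or_forall_smul_lt hfix with hup | hdown
  · exact absurd hup (not_forall_lt_smul hmn hk hrel hl hb hq hPq hPw hx)
  · exact (not_forall_lt_smul (X := Xᵒᵈ) hmn hk hrel hl hb hq hPq hPw (x := x) ⟨hx.2, hx.1⟩
      fun y hy => hdown y ⟨hy.2, hy.1⟩).elim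

end CompleteLinearOrder

theorem zpow_mul_zpow_eq_one_of_commute {G : Type*} [Group G] {a w : G} {s t p q : ℤ}
    (hcomm : Commute a (a ^ (-s) * w * a ^ (-t)))
    (h : a ^ p * (a ^ (-s) * w * a ^ (-t)) ^ q = 1) : a ^ (p - (s + t) * q) * w ^ q = 1 := by
  have haw : Commute a w := by
    simpa [mul_assoc] using
      ((Commute.self_zpow a s).mul_right hcomm).mul_right (Commute.self_zpow a t)
  have hL : a ^ (-s) * w * a ^ (-t) = a ^ (-(s + t)) * w := by
    rw [mul_assoc, ((haw.zpow_left (-t)).eq).symm, ← mul_assoc, ← zpow_add, neg_add]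
  rw [hL, (haw.zpow_left _).mul_zpow, ← mul_assoc, ← zpow_mul, ← zpow_add] at h
  rwa [sub_eq_add_neg, ← neg_mul]

theorem sub_mul_mul_nonneg_of_le_div {s t p q : ℤ} (hpq : (s + t : ℚ) ≤ (p : ℚ) / (q : ℚ)) :
    0 ≤ (p - (s + t) * q) * q := by
  rcases eq_or_ne q 0 with rfl | hq
  · simp
  have hq' : (q : ℚ) ≠ 0 := Int.cast_ne_zero.2 hq
  have key : ((p - (s + t) * q) * q : ℚ) = ((p : ℚ) / q - (s + t)) * q ^ 2 := by
    field_simp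
  exact_mod_cast key ▸ mul_nonneg (sub_nonneg.2 hpq) (sq_nonneg (q : ℚ))

namespace LowerSet

variable {G : Type*} [Group G] [LinearOrder G] [MulLeftMono G]

-- Not an instance: for ordered commutative groups Mathlib already has `LowerSet.instMulAction`.
abbrev mulLeftAction : MulAction G (LowerSet G) where
  smul g := map (OrderIso.mulLeft g)
  one_smul S := by ext; exact mem_map.trans (by simp)
  mul_smul g h S := by
    ext x
    change x ∈ map _ S ↔ x ∈ map _ (map _ S)
    simp [mul_assoc]

attribute [local instance] mulLeftAction

instance : CovariantClass G (LowerSet G) HSMul.hSMul LE.le :=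
  ⟨fun g _ _ h => (map (OrderIso.mulLeft g)).monotone h⟩

theorem mem_smul {g x : G} {S : LowerSet G} : x ∈ g • S ↔ g⁻¹ * x ∈ S :=
  mem_map.trans (by simp)

theorem Iic_one_mem_Ioo [Nontrivial G] : Iic (1 : G) ∈ Ioo ⊥ ⊤ := by
  refine ⟨bot_lt_Iic, lt_top_iff_ne_top.2 fun h => ?_⟩
  have hle (y : G) : y ≤ 1 := by
    have : y ∈ Iic (1 : G) := h ▸ trivial
    simpa using this
  obtain ⟨y, hy⟩ := exists_ne (1 : G)
  exact hy ((hle y).antisymm (by simpa using mul_le_mul_right (hle y⁻¹) y))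

theorem not_exists_mem_Ioo_forall_smul_eq :
    ¬ ∃ S ∈ Ioo (⊥ : LowerSet G) ⊤, ∀ g : G, g • S = S := by
  rintro ⟨S, ⟨hbot, htop⟩, hS⟩
  obtain ⟨x, hx⟩ := coe_nonempty.2 hbot.ne'
  obtain ⟨y, hy⟩ := (ne_univ_iff_exists_notMem _).1 (coe_eq_univ.not.2 htop.ne)
  exact hy (hS (y * x⁻¹) ▸ mem_smul.2 (by simpa using hx))

end LowerSet

theorem stmt9_general {G : Type*} [Group G] (a b : G)
    (hgen : Subgroup.closure ({a, b} : Set G) = ⊤)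
    (w₁ w₂ : G) (m n : ℕ) (hmn : 1 ≤ m + n) (r k : ℤ) (hk : 0 ≤ k)
    (w : G) (l : List G) (hl : ∀ c ∈ l, c = a ∨ c = b) (hbl : b ∈ l)
    (hw : w = l.prod)
    (s t p q : ℤ) (hq : q ≠ 0) (hpq : (s + t : ℚ) ≤ (p : ℚ) / (q : ℚ))
    (L : G) (hL : L = a ^ (-s) * w * a ^ (-t))
    (hrel₁ : (w₁ * a ^ m * w₁⁻¹) * b ^ (-r) * (w₂⁻¹ * a ^ n * w₂) * b ^ (r - k) = 1)
    (hrel₂ : a * L = L * a)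
    (hrel₃ : a ^ p * L ^ q = 1) :
    ¬ IsLeftOrderable G := by
  rintro ⟨_, lt, _, hinv⟩
  classical
  let _ : LinearOrder G := linearOrderOfSTO lt
  have : MulLeftStrictMono G := ⟨fun f _ _ h => hinv f _ _ h⟩
  have := mulLeftMono_of_mulLeftStrictMono G
  let _ := LowerSet.mulLeftAction (G := G)
  subst hL hw
  have hrel :
      (w₁ * a ^ m * w₁⁻¹) * ((b ^ (-r) * w₂⁻¹) * a ^ n * (b ^ (-r) * w₂⁻¹)⁻¹) = b ^ k := by
    rw [← one_mul (b ^ k), ← hrel₁]; group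
  exact LowerSet.not_exists_mem_Ioo_forall_smul_eq <|
    exists_mem_Ioo_forall_smul_eq hmn hk hrel hgen hl hbl hq (sub_mul_mul_nonneg_of_le_div hpq)
      (zpow_mul_zpow_eq_one_of_commute hrel₂ hrel₃) ⟨_, LowerSet.Iic_one_mem_Ioo⟩

/-- A countable group generated by `a, b` satisfying the
generalized Baumslag-Solitar relator, the commutation `aL = La` for
`L = a^{-s} w a^{-t}` (with `w` a positive word in `a, b` containing `b`),
and `a^p L^q = 1` with `q ≠ 0`, `p/q ≥ s + t`, is not left-orderable. -/
theorem stmt9 {G : Type*} [Group G] [Countable G] (a b : G)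
    (hgen : Subgroup.closure ({a, b} : Set G) = ⊤)
    (w₁ w₂ : G) (m n : ℕ) (hmn : 1 ≤ m + n) (r k : ℤ) (hk : 0 ≤ k)
    (w : G) (l : List G) (hl : ∀ c ∈ l, c = a ∨ c = b) (hbl : b ∈ l)
    (hw : w = l.prod)
    (s t p q : ℤ) (hq : q ≠ 0) (hpq : (s + t : ℚ) ≤ (p : ℚ) / (q : ℚ))
    (L : G) (hL : L = a ^ (-s) * w * a ^ (-t))
    (hrel₁ : (w₁ * a ^ m * w₁⁻¹) * b ^ (-r) * (w₂⁻¹ * a ^ n * w₂) * b ^ (r - k) = 1)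
    (hrel₂ : a * L = L * a)
    (hrel₃ : a ^ p * L ^ q = 1) :
    ¬ IsLeftOrderable G :=
  stmt9_general a b hgen w₁ w₂ m n hmn r k hk w l hl hbl hw s t p q hq hpq L hL hrel₁ hrel₂ hrel₃
end

section
/- In the free group F on two generators x and y, let u, v ≥ 0 be integers and set a = y^{v+1} x^{-1} and b = y a^{-1}. Then the word R = x² (y^{-v} x)^u x y^{-v-1} (y^{-v} x)^{-u} y^{-2v-1} is, up to conjugation and inversion, equal to the word R' = (ba)^{v+1} a (ba)^{-(v+1)} b^{-(u+1)} (ba)^{-v} a (ba)^v b^u; precisely, R⁻¹ is conjugate in F to R'. Consequently the normal closures of R and R' in F coincide. -/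
lemma stmt10_key (u v : ℕ) (x y : FreeGroup Bool) :
    ((y * (y ^ (v + 1) * x⁻¹)⁻¹) ^ (-(u:ℤ)) * y ^ (-(v:ℤ))) *
      (x ^ 2 * (y ^ (-(v : ℤ)) * x) ^ u * x * y ^ (-(v : ℤ) - 1) *
        (y ^ (-(v : ℤ)) * x) ^ (-(u : ℤ)) * y ^ (-2 * (v : ℤ) - 1))⁻¹ *
      ((y * (y ^ (v + 1) * x⁻¹)⁻¹) ^ (-(u:ℤ)) * y ^ (-(v:ℤ)))⁻¹ =
    ((y * (y ^ (v + 1) * x⁻¹)⁻¹) * (y ^ (v + 1) * x⁻¹)) ^ (v + 1) * (y ^ (v + 1) * x⁻¹) *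
      ((y * (y ^ (v + 1) * x⁻¹)⁻¹) * (y ^ (v + 1) * x⁻¹)) ^ (-((v : ℤ) + 1)) *
      (y * (y ^ (v + 1) * x⁻¹)⁻¹) ^ (-((u : ℤ) + 1)) *
      ((y * (y ^ (v + 1) * x⁻¹)⁻¹) * (y ^ (v + 1) * x⁻¹)) ^ (-(v : ℤ)) * (y ^ (v + 1) * x⁻¹) *
      ((y * (y ^ (v + 1) * x⁻¹)⁻¹) * (y ^ (v + 1) * x⁻¹)) ^ v * (y * (y ^ (v + 1) * x⁻¹)⁻¹) ^ u := by
  have hba : (y * (y ^ (v + 1) * x⁻¹)⁻¹) * (y ^ (v + 1) * x⁻¹) = y := by group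
  have hb : ∀ n : ℤ, (y * (y ^ (v + 1) * x⁻¹)⁻¹) ^ n
      = y * (x * y ^ (-(v:ℤ))) ^ n * y⁻¹ := by
    intro n
    rw [show y * (y ^ (v + 1) * x⁻¹)⁻¹ = y * (x * y ^ (-(v:ℤ))) * y⁻¹ by group, conj_zpow]
  have hyx : ∀ n : ℤ, (y ^ (-(v:ℤ)) * x) ^ n
      = y ^ (-(v:ℤ)) * (x * y ^ (-(v:ℤ))) ^ n * (y ^ (-(v:ℤ)))⁻¹ := by
    intro n
    rw [show y ^ (-(v:ℤ)) * x = y ^ (-(v:ℤ)) * (x * y ^ (-(v:ℤ))) * (y ^ (-(v:ℤ)))⁻¹ by group,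
      conj_zpow]
  have hsplit : (x * y ^ (-(v:ℤ))) ^ (-((u:ℤ) + 1))
      = ((x * y ^ (-(v:ℤ))) ^ (u:ℤ))⁻¹ * (y ^ (v:ℤ) * x⁻¹) := by
    rw [show (-((u:ℤ) + 1)) = -(u:ℤ) + (-1) by ring, zpow_add, zpow_neg_one, zpow_neg]
    group
  rw [hba, show ((y ^ (-(v:ℤ)) * x) ^ u : FreeGroup Bool) = (y ^ (-(v:ℤ)) * x) ^ (u:ℤ) from
    (zpow_natCast _ u).symm,
    show ((y * (y ^ (v + 1) * x⁻¹)⁻¹) ^ u : FreeGroup Bool)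
      = (y * (y ^ (v + 1) * x⁻¹)⁻¹) ^ (u:ℤ) from (zpow_natCast _ u).symm,
    hb, hb, hb, hyx, hyx, hsplit, zpow_neg (x * y ^ (-(v:ℤ))) (u:ℤ)]
  generalize (x * y ^ (-(v:ℤ))) ^ (u:ℤ) = W
  group

lemma conj_back {G : Type*} [Group G] {g r r' : G} (h : g * r⁻¹ * g⁻¹ = r') :
    r = g⁻¹ * r'⁻¹ * (g⁻¹)⁻¹ := by
  subst h; group

/-- In the free group on `x, y`, with `a = y^{v+1} x⁻¹` and
`b = y a⁻¹`, the relator `R` of the twisted torus knot group presentation has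
inverse conjugate to the relator `R'`, and the normal closures of `R` and `R'`
coincide. -/
theorem stmt10 (u v : ℕ) :
    let F := FreeGroup Bool
    let x : F := FreeGroup.of true
    let y : F := FreeGroup.of false
    let a : F := y ^ (v + 1) * x⁻¹
    let b : F := y * a⁻¹
    let R : F := x ^ 2 * (y ^ (-(v : ℤ)) * x) ^ u * x * y ^ (-(v : ℤ) - 1) *
      (y ^ (-(v : ℤ)) * x) ^ (-(u : ℤ)) * y ^ (-2 * (v : ℤ) - 1)
    let R' : F := (b * a) ^ (v + 1) * a * (b * a) ^ (-((v : ℤ) + 1)) *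
      b ^ (-((u : ℤ) + 1)) * (b * a) ^ (-(v : ℤ)) * a * (b * a) ^ v * b ^ u
    (∃ c : F, c * R⁻¹ * c⁻¹ = R') ∧
      Subgroup.normalClosure ({R} : Set F) = Subgroup.normalClosure ({R'} : Set F) := by
  intro F x y a b R R'
  have hkey : (b ^ (-(u:ℤ)) * y ^ (-(v:ℤ))) * R⁻¹ * (b ^ (-(u:ℤ)) * y ^ (-(v:ℤ)))⁻¹ = R' :=
    stmt10_key u v x y
  set c : F := b ^ (-(u:ℤ)) * y ^ (-(v:ℤ)) with hc
  clear_value R R'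
  refine ⟨⟨c, hkey⟩, le_antisymm ?_ ?_⟩
  · refine Subgroup.normalClosure_le_normal ?_
    rw [Set.singleton_subset_iff]
    rw [conj_back hkey]
    have h1 : R' ∈ Subgroup.normalClosure ({R'} : Set F) :=
      Subgroup.subset_normalClosure (Set.mem_singleton _)
    have h2 : R'⁻¹ ∈ Subgroup.normalClosure ({R'} : Set F) := inv_mem h1
    exact Subgroup.normalClosure_normal.conj_mem _ h2 c⁻¹
  · refine Subgroup.normalClosure_le_normal ?_
    rw [Set.singleton_subset_iff, ← hkey]
    have h1 : R ∈ Subgroup.normalClosure ({R} : Set F) :=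
      Subgroup.subset_normalClosure (Set.mem_singleton _)
    have h2 : R⁻¹ ∈ Subgroup.normalClosure ({R} : Set F) := inv_mem h1
    exact Subgroup.normalClosure_normal.conj_mem _ h2 c
end

section
/- In the free group F on generators x and y, let u, v ≥ 0 be integers and set a = y^{v+1} x^{-1} and b = y a^{-1}. Then the element λ = x² (y^{-v} x)^u x (y^{-v} x)^u equals a^{-1} ((ba)^v b^{u+1})² (ba)^{v+1} in F. Equivalently, a^{-3(3v+2)-2u} λ = a^{-(2u+3(3v+2)+1)} · (((ba)^v b^{u+1})² (ba)^v b) · a. -/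
/-! With `c = x y⁻ᵛ` one has `b a = y` and `b = y c y⁻¹`, so `b ^ (u + 1) = y c ^ (u + 1) y⁻¹`;
sliding `x` through `(y⁻ᵛ x) ^ u` turns the longitude into `x c ^ u x c ^ u x`, and both sides then
agree after free cancellation. -/

section TorusKnotLongitude

variable {G : Type*} [Group G] (x y : G) (u v : ℕ)

lemma longitude_eq_mul_pow_mul_pow_mul :
    x ^ 2 * (y ^ (-(v : ℤ)) * x) ^ u * x * (y ^ (-(v : ℤ)) * x) ^ u =
      x * (x * (y ^ v)⁻¹) ^ u * x * (x * (y ^ v)⁻¹) ^ u * x := by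
  rw [zpow_neg, zpow_natCast, sq, mul_assoc x x, ← mul_pow_mul, ← mul_assoc,
    mul_assoc _ x, ← mul_pow_mul, ← mul_assoc]

theorem longitude_eq_inv_mul_sq_mul_pow :
    let a := y ^ (v + 1) * x⁻¹
    let b := y * a⁻¹
    x ^ 2 * (y ^ (-(v : ℤ)) * x) ^ u * x * (y ^ (-(v : ℤ)) * x) ^ u =
      a⁻¹ * ((b * a) ^ v * b ^ (u + 1)) ^ 2 * (b * a) ^ (v + 1) := by
  intro a b
  have hba : b * a = y := inv_mul_cancel_right y a
  have hb : b = y * (x * (y ^ v)⁻¹) * y⁻¹ := by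
    simp only [b, a]
    group
  rw [longitude_eq_mul_pow_mul_pow_mul, hba, hb, conj_pow]
  simp only [a, sq, pow_succ _ u, pow_succ y v]
  group

end TorusKnotLongitude

/-- In the free group on `x, y`, with `a = y^{v+1} x⁻¹` and
`b = y a⁻¹`, the longitude word `λ = x² (y^{-v} x)^u x (y^{-v} x)^u` equals
`a⁻¹ ((ba)^v b^{u+1})² (ba)^{v+1}`, and hence the preferred longitude
`a^{-3(3v+2)-2u} λ` equals `a^{-(2u+3(3v+2)+1)} (((ba)^v b^{u+1})² (ba)^v b) a`. -/
theorem stmt11 (u v : ℕ) :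
    let F := FreeGroup Bool
    let x : F := FreeGroup.of true
    let y : F := FreeGroup.of false
    let a : F := y ^ (v + 1) * x⁻¹
    let b : F := y * a⁻¹
    let lam : F := x ^ 2 * (y ^ (-(v : ℤ)) * x) ^ u * x * (y ^ (-(v : ℤ)) * x) ^ u
    lam = a⁻¹ * ((b * a) ^ v * b ^ (u + 1)) ^ 2 * (b * a) ^ (v + 1) ∧
      a ^ (-(3 * (3 * (v : ℤ) + 2)) - 2 * (u : ℤ)) * lam =
        a ^ (-(2 * (u : ℤ) + 3 * (3 * (v : ℤ) + 2) + 1)) *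
          (((b * a) ^ v * b ^ (u + 1)) ^ 2 * (b * a) ^ v * b) * a := by
  intro F x y a b lam
  have hlam : lam = a⁻¹ * ((b * a) ^ v * b ^ (u + 1)) ^ 2 * (b * a) ^ (v + 1) :=
    longitude_eq_inv_mul_sq_mul_pow x y u v
  refine ⟨hlam, ?_⟩
  rw [hlam, show -(3 * (3 * (v : ℤ) + 2)) - 2 * u = -(2 * u + 3 * (3 * v + 2) + 1) + 1 by ring,
    pow_succ (b * a) v]
  simp only [zpow_add_one, mul_assoc, mul_inv_cancel_left]
end

section
/- Let G be a countable group with presentation ⟨a, b | (ba)^{v+1} a (ba)^{-(v+1)} b^{-(u+1)} (ba)^{-v} a (ba)^v b^u, a L a^{-1} L^{-1}, a^p L^q⟩, where u, v ≥ 0 are integers, L = a^{-s} w a^{-t} with s = 2u + 3(3v+2) + 1, t = -1, w = ((ba)^v b^{u+1})² (ba)^v b, and p, q are integers with q ≠ 0 and p/q ≥ 2u + 3(3v+2). Then G is not left-orderable. -/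
theorem FreeGroup.subsingleton_of_surjective {α G : Type*} [Group G] {F : FreeGroup α →* G}
    (hF : Function.Surjective F) (h : ∀ i, F (FreeGroup.of i) = 1) : Subsingleton G := by
  obtain rfl : F = 1 := FreeGroup.ext_hom _ _ h
  exact ⟨fun x y ↦ by obtain ⟨x, rfl⟩ := hF x; obtain ⟨y, rfl⟩ := hF y; rfl⟩

theorem IsLeftOrderable.exists_linearOrder {G : Type*} [Group G] (h : IsLeftOrderable G) :
    ∃ _ : LinearOrder G, MulLeftMono G := by
  obtain ⟨-, lt, hlt, hmul⟩ := h
  classical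
  let := linearOrderOfSTO lt
  exact ⟨this, ⟨fun f _ _ hle ↦ hle.elim (fun e ↦ e ▸ le_rfl) fun hl ↦ le_of_lt (hmul f _ _ hl)⟩⟩

open MulAut (conj)

theorem Int.forall_of_add_one_of_sub {P : ℤ → Prop} {v : ℕ} (hv : v ≠ 0)
    (hadd : ∀ k, P k → P (k + 1)) (hsub : ∀ k, P k → P (k - v)) {b : ℤ} (hb : P b) (z : ℤ) :
    P z := by
  have hadd_nat (k : ℤ) (i : ℕ) (hk : P k) : P (k + i) := by
    induction i with
    | zero => simpa using hk
    | succ i ih => simpa [add_assoc] using hadd _ ih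
  have hsub_one (k : ℤ) (hk : P k) : P (k - 1) := by
    simpa [show k - v + (v - 1 : ℕ) = k - 1 by omega] using hadd_nat _ (v - 1) (hsub k hk)
  induction z using Int.inductionOn' (b := b) with
  | zero => exact hb
  | succ k _ ih => exact hadd k ih
  | pred k _ ih => exact hsub_one k ih

def OppositeSign {α : Type*} [One α] [LT α] (x y : α) : Prop :=
  (x < 1 → 1 < y) ∧ (1 < x → y < 1)

/-- The word `w` of the longitude, in the form it takes modulo the first relator
(`eq_longitudeWord_of_commute`). -/
def longitudeWord {G : Type*} [Group G] (u v : ℕ) (b c : G) : G :=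
  c ^ v * b ^ u * c ^ (v + 1) * b ^ u * c ^ (v + 1)

theorem map_longitudeWord {G H F : Type*} [Group G] [Group H] [FunLike F G H]
    [MonoidHomClass F G H] (f : F) (u v : ℕ) (b c : G) :
    f (longitudeWord u v b c) = longitudeWord u v (f b) (f c) := by
  simp only [longitudeWord, map_mul, map_pow]

section LeftOrdered

variable {G : Type*} [Group G] [LinearOrder G] [MulLeftMono G] {u v : ℕ}

theorem one_lt_of_pow_mul_pow_eq_one {x y : G} {m n : ℕ} (h : x ^ m * y ^ n = 1) (hn : n ≠ 0)
    (hy : y < 1) : 1 < x := by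
  by_contra hx
  exact (Left.mul_lt_one_of_le_of_lt (pow_le_one' (not_lt.1 hx) m) (pow_lt_one' hy hn)).ne h

theorem OppositeSign.of_pow_mul_pow_eq_one {x y : G} {m n : ℕ} (h : x ^ m * y ^ n = 1)
    (hn : n ≠ 0) : OppositeSign y x :=
  ⟨one_lt_of_pow_mul_pow_eq_one h hn, one_lt_of_pow_mul_pow_eq_one (G := Gᵒᵈ) h hn⟩

theorem pow_mul_mul_pow_mul_lt_one {x x' y : G} (hx : x ≤ 1) (hx' : x' ≤ 1) (hy : y < 1)
    {i : ℕ} (hi : i ≠ 0) (j : ℕ) : y ^ i * x * y ^ j * x' < 1 :=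
  mul_lt_one_of_lt_of_le
    (mul_lt_one_of_lt_of_le (mul_lt_one_of_lt_of_le (pow_lt_one' hy hi) hx) (pow_le_one' hy.le j))
    hx'

theorem one_lt_pow_mul_mul_pow_mul {x x' y : G} (hx : 1 ≤ x) (hx' : 1 ≤ x') (hy : 1 < y)
    {i : ℕ} (hi : i ≠ 0) (j : ℕ) : 1 < y ^ i * x * y ^ j * x' :=
  pow_mul_mul_pow_mul_lt_one (G := Gᵒᵈ) hx hx' hy hi j

theorem longitudeWord_lt_one {b c : G} (hb : b ^ u ≤ 1) (hc : c < 1) :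
    longitudeWord u v b c < 1 :=
  Left.mul_lt_one_of_le_of_lt
    (mul_le_one' (mul_le_one' (mul_le_one' (pow_le_one' hc.le v) hb) (pow_le_one' hc.le _)) hb)
    (pow_lt_one' hc v.succ_ne_zero)

theorem one_lt_longitudeWord {b c : G} (hb : 1 ≤ b ^ u) (hc : 1 < c) :
    1 < longitudeWord u v b c :=
  longitudeWord_lt_one (G := Gᵒᵈ) hb hc

theorem one_lt_of_longitudeWord {x y : G} (h : longitudeWord u v y (y * x) < 1 → 1 < x)
    (hx : x < 1) : 1 < y := by
  by_contra hy
  have hy := not_lt.1 hy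
  exact (h (longitudeWord_lt_one (pow_le_one' hy u) (Left.mul_lt_one_of_le_of_lt hy hx))).not_gt hx

theorem OppositeSign.of_longitudeWord {x y : G}
    (h : OppositeSign (longitudeWord u v y (y * x)) x) : OppositeSign x y :=
  ⟨one_lt_of_longitudeWord h.1, one_lt_of_longitudeWord (G := Gᵒᵈ) h.2⟩

end LeftOrdered

section Relator

variable {G : Type*} [Group G] {a b c : G} {u v : ℕ}

theorem relator_eq_one_iff :
    (b * a) ^ (v + 1) * a * (b * a) ^ (-((v : ℤ) + 1)) * b ^ (-((u : ℤ) + 1)) *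
        (b * a) ^ (-(v : ℤ)) * a * (b * a) ^ v * b ^ u = 1 ↔
      a * ((b * a) ^ v * b ^ u * (b * a) ^ (v + 1)) * a =
        (b * a) ^ v * b ^ (u + 1) * (b * a) ^ (v + 1) := by
  generalize b * a = c
  rw [show c ^ (v + 1) * a * c ^ (-((v : ℤ) + 1)) * b ^ (-((u : ℤ) + 1)) * c ^ (-(v : ℤ)) * a *
      c ^ v * b ^ u = (a * c ^ v * b ^ u)⁻¹ * (a * (c ^ v * b ^ u * c ^ (v + 1)) * a *
      (c ^ v * b ^ (u + 1) * c ^ (v + 1))⁻¹) * (a * c ^ v * b ^ u)⁻¹⁻¹ by group,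
    conj_eq_one_iff, mul_inv_eq_one]

theorem eq_longitudeWord_of_commute
    (hr : a * ((b * a) ^ v * b ^ u * (b * a) ^ (v + 1)) * a =
      (b * a) ^ v * b ^ (u + 1) * (b * a) ^ (v + 1))
    (ha : Commute a (((b * a) ^ v * b ^ (u + 1)) ^ 2 * (b * a) ^ v * b)) :
    ((b * a) ^ v * b ^ (u + 1)) ^ 2 * (b * a) ^ v * b = longitudeWord u v b (b * a) := by
  generalize hc : b * a = c at hr ha ⊢
  have hac : a * c⁻¹ = b⁻¹ := by rw [← hc]; group
  rw [sq] at ha ⊢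
  calc c ^ v * b ^ (u + 1) * (c ^ v * b ^ (u + 1)) * c ^ v * b
      = a⁻¹ * (c ^ v * b ^ (u + 1) * (c ^ v * b ^ (u + 1)) * c ^ v * b * a) := by
        rw [← ha.eq]; group
    _ = a⁻¹ * (c ^ v * b ^ (u + 1) * c ^ (v + 1)) * (c ^ (v + 1))⁻¹ *
        (c ^ v * b ^ (u + 1) * c ^ (v + 1)) := by
        rw [mul_assoc _ b a, hc]; group
    _ = c ^ v * b ^ u * c ^ (v + 1) * (a * c⁻¹) * b ^ (u + 1) * c ^ (v + 1) := by
        nth_rewrite 1 [← hr]; group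
    _ = longitudeWord u v b c := by rw [hac, longitudeWord]; group

theorem conj_inv_pow_mul_pow_eq
    (hr : a * (c ^ v * b ^ u * c ^ (v + 1)) * a = c ^ v * b ^ (u + 1) * c ^ (v + 1)) :
    conj (c ^ v * b ^ u)⁻¹ a = b * (conj (c ^ (v + 1)) a)⁻¹ := by
  simp only [MulAut.conj_apply]
  calc (c ^ v * b ^ u)⁻¹ * a * (c ^ v * b ^ u)⁻¹⁻¹
      = (c ^ v * b ^ u)⁻¹ * (a * (c ^ v * b ^ u * c ^ (v + 1)) * a) * (c ^ (v + 1) * a)⁻¹ := by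
        group
    _ = b * (c ^ (v + 1) * a * (c ^ (v + 1))⁻¹)⁻¹ := by rw [hr]; group

theorem conj_pow_mul_pow_mul_pow_eq
    (hr : a * (c ^ v * b ^ u * c ^ (v + 1)) * a = c ^ v * b ^ (u + 1) * c ^ (v + 1)) :
    conj (c ^ (v + 1) * b ^ u * c ^ (v + 1)) a = (conj c a)⁻¹ * conj (c ^ (v + 1)) b := by
  simp only [MulAut.conj_apply]
  calc c ^ (v + 1) * b ^ u * c ^ (v + 1) * a * (c ^ (v + 1) * b ^ u * c ^ (v + 1))⁻¹
      = c * a⁻¹ * (a * (c ^ v * b ^ u * c ^ (v + 1)) * a) *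
          (c ^ (v + 1) * b ^ u * c ^ (v + 1))⁻¹ := by group
    _ = (c * a * c⁻¹)⁻¹ * (c ^ (v + 1) * b * (c ^ (v + 1))⁻¹) := by rw [hr]; group

theorem commute_of_commute_zpow_mul_mul_zpow {w : G} {s t : ℤ}
    (h : Commute a (a ^ s * w * a ^ t)) : Commute a w := by
  have := ((Commute.self_zpow a (-s)).mul_right h).mul_right (Commute.self_zpow a (-t))
  rwa [show a ^ (-s) * (a ^ s * w * a ^ t) * a ^ (-t) = w by group] at this

end Relator

section Surgery

variable {G : Type*} [Group G] {a w : G}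

theorem exists_pow_mul_pow_eq_one_of_zpow {d q : ℤ} (h : a ^ d * w ^ q = 1) (hd : 0 ≤ d)
    (hq : 0 < q) : ∃ m n : ℕ, n ≠ 0 ∧ a ^ m * w ^ n = 1 := by
  lift d to ℕ using hd
  lift q to ℕ using hq.le
  exact ⟨d, q, by omega, by simpa using h⟩

theorem exists_pow_mul_pow_eq_one (haw : Commute a w) {p q s t : ℤ}
    (h : a ^ p * (a ^ (-s) * w * a ^ (-t)) ^ q = 1) (hq : q ≠ 0) (hpq : (s + t : ℚ) ≤ p / q) :
    ∃ m n : ℕ, n ≠ 0 ∧ a ^ m * w ^ n = 1 := by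
  have hL : a ^ (-s) * w * a ^ (-t) = a ^ (-(s + t)) * w := by
    rw [mul_assoc, ← (haw.zpow_left (-t)).eq]; group
  have hd : a ^ (p - (s + t) * q) * w ^ q = 1 := by
    rw [← h, hL, (haw.zpow_left _).mul_zpow, ← mul_assoc, ← zpow_mul, ← zpow_add]; ring_nf
  rcases hq.lt_or_gt with hq | hq
  · have hle : (p : ℚ) ≤ (s + t) * q := (le_div_iff_of_neg (by exact_mod_cast hq)).1 hpq
    refine exists_pow_mul_pow_eq_one_of_zpow (d := -(p - (s + t) * q)) (q := -q) ?_
      (by exact_mod_cast (by linarith : (0 : ℚ) ≤ -(p - (s + t) * q))) (by omega)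
    rw [zpow_neg, zpow_neg, ← mul_inv_rev, ← (haw.zpow_zpow _ _).eq, hd, inv_one]
  · have hle : ((s + t) * q : ℚ) ≤ p := (le_div_iff₀ (by exact_mod_cast hq)).1 hpq
    exact exists_pow_mul_pow_eq_one_of_zpow hd
      (by exact_mod_cast (by linarith : (0 : ℚ) ≤ p - (s + t) * q)) hq

end Surgery

section Signs

variable {G : Type*} [Group G] [LinearOrder G] [MulLeftMono G]

/-- Sign constraints imposed by a left order with `1 < a` when
`a ^ m * longitudeWord u v b c ^ n = 1` with `n ≠ 0`. -/
structure SurgerySigns (u v : ℕ) (a b c : G) : Prop where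
  mul_eq : b * a = c
  rel : a * (c ^ v * b ^ u * c ^ (v + 1)) * a = c ^ v * b ^ (u + 1) * c ^ (v + 1)
  one_lt_a : 1 < a
  oppositeSign_word : ∀ g, OppositeSign (conj g (longitudeWord u v b c)) (conj g a)

namespace SurgerySigns

variable {u v : ℕ} {a b c : G}

theorem of_pow_mul_pow_eq_one {m n : ℕ}
    (hr : a * ((b * a) ^ v * b ^ u * (b * a) ^ (v + 1)) * a =
      (b * a) ^ v * b ^ (u + 1) * (b * a) ^ (v + 1))
    (hw : a ^ m * longitudeWord u v b (b * a) ^ n = 1) (hn : n ≠ 0) (ha : 1 < a) :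
    SurgerySigns u v a b (b * a) where
  mul_eq := rfl
  rel := hr
  one_lt_a := ha
  oppositeSign_word g :=
    .of_pow_mul_pow_eq_one (by rw [← map_pow, ← map_pow, ← map_mul, hw, map_one]) hn

theorem oppositeSign_conj (h : SurgerySigns u v a b c) (g : G) :
    OppositeSign (conj g a) (conj g b) := by
  refine .of_longitudeWord (u := u) (v := v) ?_
  rw [← map_mul, h.mul_eq, ← map_longitudeWord]
  exact h.oppositeSign_word g

theorem b_lt_one (h : SurgerySigns u v a b c) : b < 1 := by
  simpa using (h.oppositeSign_conj 1).2 (by simpa using h.one_lt_a)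

theorem one_lt_conj_a (h : SurgerySigns u v a b c) {g : G} (hg : conj g b ≤ 1) :
    1 < conj g a := by
  rcases lt_trichotomy (conj g a) 1 with ha | ha | ha
  · exact absurd ((h.oppositeSign_conj g).1 ha) hg.not_gt
  · exact absurd ((conj g).map_eq_one_iff.1 ha) h.one_lt_a.ne'
  · exact ha

theorem v_ne_zero (h : SurgerySigns u v a b c) : v ≠ 0 := by
  rintro rfl
  have hr := h.rel
  rw [← h.mul_eq] at hr
  simp only [pow_zero, one_mul, zero_add, pow_one] at hr
  have hconj : conj (b ^ (u + 1))⁻¹ a = b * a⁻¹ := by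
    rw [MulAut.conj_apply]
    calc (b ^ (u + 1))⁻¹ * a * (b ^ (u + 1))⁻¹⁻¹
        = (b ^ (u + 1))⁻¹ * (a * (b ^ u * (b * a)) * a) * (a * a)⁻¹ := by group
      _ = b * a⁻¹ := by rw [hr]; group
  have hb := (h.oppositeSign_conj _).1
    (hconj ▸ Left.mul_lt_one h.b_lt_one (Left.inv_lt_one_iff.2 h.one_lt_a))
  rw [MulAut.conj_apply, show (b ^ (u + 1))⁻¹ * b * (b ^ (u + 1))⁻¹⁻¹ = b by group] at hb
  exact h.b_lt_one.not_gt hb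

theorem one_le_c (h : SurgerySigns u v a b c) : 1 ≤ c := by
  by_contra hc
  have hc := not_le.1 hc
  have hbu : b ^ u ≤ 1 := pow_le_one' h.b_lt_one.le u
  have hw₁ : conj (c ^ v * b ^ u)⁻¹ (longitudeWord u v b c) =
      c ^ (v + 1) * b ^ u * c ^ (2 * v + 1) * b ^ u := by
    simp only [MulAut.conj_apply, longitudeWord]; group
  have hw₂ : conj (c ^ (v + 1)) (longitudeWord u v b c) =
      c ^ (2 * v + 1) * b ^ u * c ^ (v + 1) * b ^ u := by
    simp only [MulAut.conj_apply, longitudeWord]; group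
  have ha₁ := (h.oppositeSign_word _).1
    (hw₁ ▸ pow_mul_mul_pow_mul_lt_one hbu hbu hc v.succ_ne_zero _)
  have ha₂ := (h.oppositeSign_word _).1
    (hw₂ ▸ pow_mul_mul_pow_mul_lt_one hbu hbu hc (2 * v).succ_ne_zero _)
  have hb : b = conj (c ^ v * b ^ u)⁻¹ a * conj (c ^ (v + 1)) a := by
    rw [conj_inv_pow_mul_pow_eq h.rel]; group
  exact h.b_lt_one.not_gt (hb ▸ Left.one_lt_mul ha₁ ha₂)

theorem c_ne_one (h : SurgerySigns u v a b c) : c ≠ 1 := by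
  intro hc
  have hr := h.rel
  rw [hc, eq_inv_of_mul_eq_one_left (h.mul_eq.trans hc)] at hr
  have ha : a ^ 3 = 1 :=
    calc a ^ 3 = a * (1 ^ v * a⁻¹ ^ u * 1 ^ (v + 1)) * a * (a⁻¹ ^ (u + 1))⁻¹ := by group
      _ = 1 := by rw [hr]; group
  exact (one_lt_pow' h.one_lt_a three_ne_zero).ne' ha

theorem u_ne_zero (h : SurgerySigns u v a b c) (hc : 1 < c) : u ≠ 0 := by
  rintro rfl
  have ha := (h.oppositeSign_word 1).2
    (by simpa using one_lt_longitudeWord (v := v) (pow_zero b).ge hc)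
  exact h.one_lt_a.not_gt (by simpa using ha)

theorem conj_lt_one_of_one_lt_conj (h : SurgerySigns u v a b c) (hc : 1 < c) {k : ℤ}
    (hk : 1 < conj (c ^ k) b) : conj (c ^ (k + v + 1)) a < 1 := by
  have hw : conj (c ^ (k + v + 1)) (longitudeWord u v b c) =
      c ^ (2 * v + 1) * conj (c ^ k) b ^ u * c ^ (v + 1) * conj (c ^ k) b ^ u := by
    simp only [MulAut.conj_apply, conj_pow, longitudeWord]; group
  have hbu := one_le_pow_of_one_le' hk.le u
  exact (h.oppositeSign_word _).2
    (hw ▸ one_lt_pow_mul_mul_pow_mul hbu hbu hc (2 * v).succ_ne_zero _)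

theorem conj_lt_one_of_one_lt_conj_of_one_lt_conj (h : SurgerySigns u v a b c) (hc : 1 < c)
    {j : ℤ} (h₁ : 1 < conj (c ^ (j + v)) b) (h₂ : 1 < conj (c ^ (j + 2 * v + 1)) b) :
    conj (c ^ j) a < 1 := by
  have hw : conj (c ^ j) (longitudeWord u v b c) =
      conj (c ^ (j + v)) b ^ u * conj (c ^ (j + 2 * v + 1)) b ^ u * c ^ (3 * v + 2) := by
    simp only [MulAut.conj_apply, conj_pow, longitudeWord]; group
  refine (h.oppositeSign_word _).2
    (hw ▸ Left.one_lt_mul_of_le_of_lt ?_ (one_lt_pow' hc (by omega)))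
  exact one_le_mul (one_le_pow_of_one_le' h₁.le u) (one_le_pow_of_one_le' h₂.le u)

theorem not_exists_one_lt_conj (h : SurgerySigns u v a b c) (hc : 1 < c) :
    ¬ ∃ k : ℤ, 1 < conj (c ^ k) b := by
  rintro ⟨k₀, hk₀⟩
  have up {k : ℤ} (hk : 1 < conj (c ^ k) b) : 1 < conj (c ^ (k + v + 1)) b :=
    (h.oppositeSign_conj _).1 (h.conj_lt_one_of_one_lt_conj hc hk)
  have down {j : ℤ} (h₁ : 1 < conj (c ^ (j + v)) b) (h₂ : 1 < conj (c ^ (j + v + v + 1)) b) :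
      1 < conj (c ^ j) b :=
    (h.oppositeSign_conj _).1
      (h.conj_lt_one_of_one_lt_conj_of_one_lt_conj hc h₁ (by convert h₂ using 4; ring))
  have hall := Int.forall_of_add_one_of_sub (P := fun k ↦ 1 < conj (c ^ k) b) h.v_ne_zero
    (fun k hk ↦ down (by convert up hk using 4; ring) (by convert up (up hk) using 4; ring))
    (fun k hk ↦ down (by convert hk using 4; ring) (by convert up hk using 4; ring)) hk₀
  exact h.one_lt_a.not_gt (by simpa using h.conj_lt_one_of_one_lt_conj hc (hall (-(v + 1))))

theorem exists_one_lt_conj (h : SurgerySigns u v a b c) (hu : u ≠ 0) :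
    ∃ k : ℤ, 1 < conj (c ^ k) b := by
  by_contra hb
  push Not at hb
  have ha (k : ℕ) : 1 < conj (c ^ k) a := h.one_lt_conj_a (by exact_mod_cast hb k)
  set β := conj (c ^ (-v : ℤ)) (b ^ u)
  have hb_conj : 1 < (b ^ u)⁻¹ * β * b ^ u := by
    have ha_conj : conj (c ^ v * b ^ u)⁻¹ a < 1 := by
      rw [conj_inv_pow_mul_pow_eq h.rel]
      exact Left.mul_lt_one h.b_lt_one (Left.inv_lt_one_iff.2 (ha (v + 1)))
    have := one_lt_pow' ((h.oppositeSign_conj _).1 ha_conj) hu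
    rw [← map_pow] at this
    convert this using 1
    simp only [β, MulAut.conj_apply]; group
  have hbu : b ^ u < β :=
    calc b ^ u < β * b ^ u := by
          simpa only [mul_one, ← mul_assoc, mul_inv_cancel, one_mul] using
            mul_lt_mul_right hb_conj (b ^ u)
      _ ≤ β := mul_le_of_le_one_right' (pow_le_one' h.b_lt_one.le u)
  -- Two conjugates of `longitudeWord u v b c` differing only in the last factor `b ^ u < β`.
  have hw₁ : conj (c ^ (v + 1) * b ^ u * c ^ (v + 1)) (longitudeWord u v b c) =
      c ^ (v + 1) * b ^ u * c ^ (2 * v + 1) * b ^ u := by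
    simp only [MulAut.conj_apply, longitudeWord]; group
  have hw₂ : conj c (longitudeWord u v b c) = c ^ (v + 1) * b ^ u * c ^ (2 * v + 1) * β := by
    simp only [β, MulAut.conj_apply, longitudeWord]; group
  have ha₁ : conj (c ^ (v + 1) * b ^ u * c ^ (v + 1)) a < 1 := by
    rw [conj_pow_mul_pow_mul_pow_eq h.rel]
    exact mul_lt_one_of_lt_of_le (Left.inv_lt_one_iff.2 (by simpa using ha 1))
      (by exact_mod_cast hb (v + 1))
  have hw₁_ge : 1 ≤ c ^ (v + 1) * b ^ u * c ^ (2 * v + 1) * b ^ u :=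
    not_lt.1 fun hw ↦ ha₁.not_gt ((h.oppositeSign_word _).1 (hw₁ ▸ hw))
  have hw₂_le : c ^ (v + 1) * b ^ u * c ^ (2 * v + 1) * β ≤ 1 :=
    not_lt.1 fun hw ↦
      (by simpa using ha 1 : 1 < conj c a).not_gt ((h.oppositeSign_word _).2 (hw₂ ▸ hw))
  exact (hw₁_ge.trans_lt (mul_lt_mul_right hbu _)).not_ge hw₂_le

end SurgerySigns

theorem not_surgerySigns {u v : ℕ} {a b c : G} : ¬ SurgerySigns u v a b c := fun h ↦
  have hc : 1 < c := h.one_le_c.lt_of_ne' h.c_ne_one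
  h.not_exists_one_lt_conj hc (h.exists_one_lt_conj (h.u_ne_zero hc))

theorem eq_one_of_pow_mul_longitudeWord_pow_eq_one {u v m n : ℕ} {a b : G}
    (hr : a * ((b * a) ^ v * b ^ u * (b * a) ^ (v + 1)) * a =
      (b * a) ^ v * b ^ (u + 1) * (b * a) ^ (v + 1))
    (hw : a ^ m * longitudeWord u v b (b * a) ^ n = 1) (hn : n ≠ 0) : a = 1 := by
  by_contra ha
  rcases lt_or_gt_of_ne ha with ha | ha
  · exact not_surgerySigns (SurgerySigns.of_pow_mul_pow_eq_one (G := Gᵒᵈ) hr hw hn ha)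
  · exact not_surgerySigns (SurgerySigns.of_pow_mul_pow_eq_one hr hw hn ha)

end Signs

theorem stmt13_general (u v : ℕ) (p q : ℤ) (hq : q ≠ 0)
    (hpq : (2 * (u : ℚ) + 3 * (3 * (v : ℚ) + 2)) ≤ (p : ℚ) / (q : ℚ))
    (a b : FreeGroup Bool)
    (ha : a = FreeGroup.of true) (hb : b = FreeGroup.of false)
    (s t : ℤ) (hs : s = 2 * u + 3 * (3 * v + 2) + 1) (ht : t = -1)
    (w L : FreeGroup Bool)
    (hw : w = ((b * a) ^ v * b ^ (u + 1)) ^ 2 * (b * a) ^ v * b)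
    (hL : L = a ^ (-s) * w * a ^ (-t))
    (rels : Set (FreeGroup Bool))
    (hrels : rels = {(b * a) ^ (v + 1) * a * (b * a) ^ (-((v : ℤ) + 1)) *
        b ^ (-((u : ℤ) + 1)) * (b * a) ^ (-(v : ℤ)) * a * (b * a) ^ v * b ^ u,
      a * L * a⁻¹ * L⁻¹, a ^ p * L ^ q})
    (G : Type*) [Group G] (iso : G ≃* PresentedGroup rels) :
    ¬ IsLeftOrderable G := by
  intro hG
  obtain ⟨_, _⟩ := hG.exists_linearOrder
  set F : FreeGroup Bool →* G := iso.symm.toMonoidHom.comp (PresentedGroup.mk rels)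
  have hF {r : FreeGroup Bool} (hr : r ∈ rels) : F r = 1 := by
    simp [F, PresentedGroup.one_of_mem hr]
  subst hrels
  have h₁ := hF (Set.mem_insert _ _)
  have h₂ := hF (Set.mem_insert_of_mem _ (Set.mem_insert _ _))
  have h₃ := hF (Set.mem_insert_of_mem _ (Set.mem_insert_of_mem _ rfl))
  simp only [map_mul, map_pow, map_zpow, map_inv] at h₁ h₂ h₃
  have hr := relator_eq_one_iff.1 h₁
  have hFL : F L = F a ^ (-s) * F w * F a ^ (-t) := by simp [hL]
  have hFw : F w = ((F b * F a) ^ v * F b ^ (u + 1)) ^ 2 * (F b * F a) ^ v * F b := by simp [hw]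
  have haw : Commute (F a) (F w) :=
    commute_of_commute_zpow_mul_mul_zpow (hFL ▸ commutatorElement_eq_one_iff_commute.1 h₂)
  obtain ⟨m, n, hn, hmn⟩ := exists_pow_mul_pow_eq_one haw (hFL ▸ h₃) hq
    (by rw [hs, ht]; push_cast; linarith)
  rw [hFw, eq_longitudeWord_of_commute hr (hFw ▸ haw)] at hmn
  have hFa : F a = 1 := eq_one_of_pow_mul_longitudeWord_pow_eq_one hr hmn hn
  have hFb : F b = 1 := by simpa [hFa, pow_succ] using hr
  refine not_subsingleton_iff_nontrivial.2 hG.1 (FreeGroup.subsingleton_of_surjective (F := F)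
    (iso.symm.surjective.comp (PresentedGroup.mk_surjective _)) ?_)
  rintro (_ | _) <;> simp [← ha, ← hb, hFa, hFb]

/-- The group presented by
`⟨a, b | (ba)^{v+1} a (ba)^{-(v+1)} b^{-(u+1)} (ba)^{-v} a (ba)^v b^u,
 aLa⁻¹L⁻¹, a^p L^q⟩` with `L = a^{-s} w a^{-t}`, `s = 2u+3(3v+2)+1`, `t = -1`,
`w = ((ba)^v b^{u+1})² (ba)^v b`, `q ≠ 0` and `p/q ≥ 2u + 3(3v+2)`,
is not left-orderable. -/
theorem stmt13 (u v : ℕ) (p q : ℤ) (hq : q ≠ 0)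
    (hpq : (2 * (u : ℚ) + 3 * (3 * (v : ℚ) + 2)) ≤ (p : ℚ) / (q : ℚ))
    (a b : FreeGroup Bool)
    (ha : a = FreeGroup.of true) (hb : b = FreeGroup.of false)
    (s t : ℤ) (hs : s = 2 * u + 3 * (3 * v + 2) + 1) (ht : t = -1)
    (w L : FreeGroup Bool)
    (hw : w = ((b * a) ^ v * b ^ (u + 1)) ^ 2 * (b * a) ^ v * b)
    (hL : L = a ^ (-s) * w * a ^ (-t))
    (rels : Set (FreeGroup Bool))
    (hrels : rels = {(b * a) ^ (v + 1) * a * (b * a) ^ (-((v : ℤ) + 1)) *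
        b ^ (-((u : ℤ) + 1)) * (b * a) ^ (-(v : ℤ)) * a * (b * a) ^ v * b ^ u,
      a * L * a⁻¹ * L⁻¹, a ^ p * L ^ q})
    (G : Type*) [Group G] [Countable G] (iso : G ≃* PresentedGroup rels) :
    ¬ IsLeftOrderable G :=
  stmt13_general u v p q hq hpq a b ha hb s t hs ht w L hw hL rels hrels G iso
end

section
/- Let G be a group acting on ℝ by orientation-preserving homeomorphisms, generated by elements a and b. Suppose x ∈ ℝ is fixed by a, and suppose there exist an element w of G that is a product of nonnegative powers of a and b containing at least one b, and integers N, Q with Q ≥ 1, such that a^N = w^{-Q} in G. Then x is fixed by b, and hence x is a global fixed point of the action. -/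
/-!
If `b` moved `x`, say downwards, then every letter of `w` would move `x` weakly downwards and `b`
strictly, so `w` would move `x` strictly downwards. A point moved by a strictly monotone bijection
is moved by all its nonzero powers, so `w ^ (-Q) = a ^ N` could not fix `x`, although `a` does.
Hence `b`, and with it all of `G = ⟨a, b⟩`, fixes `x`.
-/

section ListSmul

variable {M α : Type*} [Monoid M] [MulAction M α] {l : List M} {x : α}

theorem List.prod_smul_le_of_forall_smul_le [Preorder α]
    (hmono : ∀ m : M, Monotone (m • · : α → α))
    (hle : ∀ m ∈ l, m • x ≤ x) : l.prod • x ≤ x := by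
  induction l with
  | nil => simp
  | cons m l ih =>
    rw [List.prod_cons, mul_smul]
    exact (hmono m (ih fun k hk => hle k (.tail _ hk))).trans (hle m List.mem_cons_self)

theorem List.prod_smul_lt_of_forall_smul_le [PartialOrder α]
    (hmono : ∀ m : M, StrictMono (m • · : α → α))
    (hle : ∀ m ∈ l, m • x ≤ x) (hlt : ∃ m ∈ l, m • x < x) : l.prod • x < x := by
  induction l with
  | nil => simp at hlt
  | cons m l ih =>
    have hle_tail : ∀ k ∈ l, k • x ≤ x := fun k hk => hle k (.tail _ hk)
    rw [List.prod_cons, mul_smul]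
    obtain ⟨n, hn, hnx⟩ := hlt
    rcases List.mem_cons.mp hn with rfl | hn
    · exact ((hmono n).monotone
        (List.prod_smul_le_of_forall_smul_le (fun k => (hmono k).monotone) hle_tail)).trans_lt hnx
    · exact (hmono m (ih hle_tail ⟨n, hn, hnx⟩)).trans_le (hle m List.mem_cons_self)

theorem List.lt_prod_smul_of_forall_le_smul [PartialOrder α]
    (hmono : ∀ m : M, StrictMono (m • · : α → α))
    (hle : ∀ m ∈ l, x ≤ m • x) (hlt : ∃ m ∈ l, x < m • x) : x < l.prod • x :=
  List.prod_smul_lt_of_forall_smul_le (α := αᵒᵈ) (fun m => (hmono m).dual)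
    (x := OrderDual.toDual x) hle hlt

end ListSmul

namespace OrderIso

variable {α : Type*} [LinearOrder α]

theorem mem_stabilizer_of_pow_mem {f : α ≃o α} {x : α} {n : ℕ} (hn : 0 < n)
    (h : f ^ n ∈ MulAction.stabilizer (α ≃o α) x) :
    f ∈ MulAction.stabilizer (α ≃o α) x := by
  rw [MulAction.mem_stabilizer_iff] at h ⊢
  have h' : (f • ·)^[n] x = id^[n] x := by rw [smul_iterate, Function.iterate_id]; exact h
  have hcomm : Function.Commute (f • · : α → α) id := Function.Commute.id_right
  exact (hcomm.iterate_pos_eq_iff_map_eq f.monotone strictMono_id hn).mp h'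

theorem mem_stabilizer_of_zpow_mem {f : α ≃o α} {x : α} {n : ℤ} (hn : n ≠ 0)
    (h : f ^ n ∈ MulAction.stabilizer (α ≃o α) x) :
    f ∈ MulAction.stabilizer (α ≃o α) x := by
  refine mem_stabilizer_of_pow_mem (Int.natAbs_pos.mpr hn) ?_
  rcases Int.natAbs_eq n with hn | hn <;> rw [hn] at h
  · rwa [zpow_natCast] at h
  · rwa [zpow_neg, zpow_natCast, inv_mem_iff] at h

end OrderIso

theorem map_list_prod_apply_ne_self {G α : Type*} [Monoid G] [LinearOrder α]
    (Φ : G →* (α ≃o α))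
    {a b : G} {l : List G} (hl : ∀ c ∈ l, c = a ∨ c = b) (hbl : b ∈ l) {x : α}
    (hax : Φ a x = x) (hbx : Φ b x ≠ x) : Φ l.prod x ≠ x := by
  rw [map_list_prod]
  rcases hbx.lt_or_gt with hlt | hgt
  · refine (List.prod_smul_lt_of_forall_smul_le (fun f => f.strictMono) ?_
      ⟨Φ b, List.mem_map_of_mem hbl, hlt⟩).ne
    simp only [List.forall_mem_map, RelIso.smul_def]
    intro c hc
    rcases hl c hc with rfl | rfl
    exacts [hax.le, hlt.le]
  · refine (List.lt_prod_smul_of_forall_le_smul (fun f => f.strictMono) ?_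
      ⟨Φ b, List.mem_map_of_mem hbl, hgt⟩).ne'
    simp only [List.forall_mem_map, RelIso.smul_def]
    intro c hc
    rcases hl c hc with rfl | rfl
    exacts [hax.ge, hgt.le]

/-- If `G = ⟨a, b⟩` acts on `ℝ` by orientation-preserving
homeomorphisms, `x` is fixed by `a`, `w` is a product of `a`'s and `b`'s
containing at least one `b`, and `a^N = w^{-Q}` with `Q ≥ 1`, then `x` is
fixed by `b` and hence is a global fixed point. -/
theorem stmt14 {G : Type*} [Group G] (Φ : G →* (ℝ ≃o ℝ)) (a b : G)
    (hgen : Subgroup.closure ({a, b} : Set G) = ⊤)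
    (x : ℝ) (hax : Φ a x = x)
    (w : G) (l : List G) (hl : ∀ c ∈ l, c = a ∨ c = b) (hbl : b ∈ l)
    (hw : w = l.prod)
    (N Q : ℤ) (hQ : 1 ≤ Q) (h : a ^ N = w ^ (-Q)) :
    Φ b x = x ∧ ∀ g : G, Φ g x = x := by
  have hb : Φ b x = x := by
    by_contra hbx
    have hwx : Φ w ∉ MulAction.stabilizer (ℝ ≃o ℝ) x :=
      hw ▸ map_list_prod_apply_ne_self Φ hl hbl hax hbx
    refine hwx (OrderIso.mem_stabilizer_of_zpow_mem (n := -Q) (by omega) ?_)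
    rw [← map_zpow, ← h, map_zpow]
    exact zpow_mem (hax : Φ a ∈ MulAction.stabilizer (ℝ ≃o ℝ) x) N
  have hgen_le : Subgroup.closure {a, b} ≤ (MulAction.stabilizer (ℝ ≃o ℝ) x).comap Φ :=
    (Subgroup.closure_le _).mpr <|
      Set.insert_subset_iff.mpr ⟨hax, Set.singleton_subset_iff.mpr hb⟩
  exact ⟨hb, fun g => hgen_le (hgen ▸ Subgroup.mem_top g)⟩
end
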